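/- arXiv:2103.08211 — 7 statements merged into one kernel-verified Lean document; each statement's English description precedes it below -/
import Mathlib

section
/- For positive semidefinite matrices B and C of the same size and a real number q ≥ 1, tr((B + C)^q) ≥ tr(B^q) + tr(C^q). -/
/-!
Put `A = B + C` and `p = q - 1 ≥ 0`. It suffices to show `tr B^q ≤ tr (A^p B)` whenever
`0 ≤ B ≤ A`: the two bounds for `B` and `C` add up to `tr (A^p A) = tr A^q`.
In an orthonormal eigenbasis `(vⱼ, βⱼ)` of `B` one has `tr (A^p B) = ∑ⱼ βⱼ ⟪vⱼ, A^p vⱼ⟫`,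
so it is enough that `βⱼ^p ≤ ⟪vⱼ, A^p vⱼ⟫`. For `p ≤ 1` this is the operator monotonicity of
`t ↦ t^p` (Löwner–Heinz); for `p ≥ 1` it follows from `βⱼ ≤ ⟪vⱼ, A vⱼ⟫` and Jensen's inequality
`⟪v, A v⟫^p ≤ ⟪v, A^p v⟫` for unit vectors `v`.
Operator monotonicity is applied in the C⋆-algebra of complex matrices, so real matrices are
complexified first; this does not change their eigenvalues.
-/

open Matrix
open scoped ComplexOrder

section

variable {n : Type*} [Fintype n] {𝕜 : Type*} [RCLike 𝕜]

lemma Matrix.PosSemidef.re_dotProduct_mulVec_le {A B : Matrix n n 𝕜} (hBA : (A - B).PosSemidef)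
    (x : n → 𝕜) : RCLike.re (star x ⬝ᵥ (B *ᵥ x)) ≤ RCLike.re (star x ⬝ᵥ (A *ᵥ x)) := by
  simpa [sub_mulVec] using hBA.re_dotProduct_nonneg x

variable [DecidableEq n]

namespace Matrix.IsHermitian

variable {A : Matrix n n 𝕜} (hA : A.IsHermitian)

lemma star_eigenvectorUnitary_mulVec_apply (x : n → 𝕜) (i : n) :
    (star (hA.eigenvectorUnitary : Matrix n n 𝕜) *ᵥ x) i =
      star ⇑(hA.eigenvectorBasis i) ⬝ᵥ x := by
  simp [mulVec, dotProduct, star_apply]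

lemma star_eigenvectorBasis_dotProduct_self (j : n) :
    star ⇑(hA.eigenvectorBasis j) ⬝ᵥ ⇑(hA.eigenvectorBasis j) = 1 := by
  rw [dotProduct_comm, ← EuclideanSpace.inner_eq_star_dotProduct, inner_self_eq_norm_sq_to_K,
    hA.eigenvectorBasis.orthonormal.1 j]
  simp

lemma dotProduct_cfc_mulVec (f : ℝ → ℝ) (x : n → 𝕜) :
    star x ⬝ᵥ (cfc f A *ᵥ x) =
      ((∑ i, f (hA.eigenvalues i) * ‖star ⇑(hA.eigenvectorBasis i) ⬝ᵥ x‖ ^ 2 : ℝ) : 𝕜) := by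
  let U : Matrix n n 𝕜 := hA.eigenvectorUnitary
  have hx : star x ᵥ* U = star (star U *ᵥ x) := by
    rw [star_mulVec, star_eq_conjTranspose, conjTranspose_conjTranspose]
  rw [hA.cfc_eq, IsHermitian.cfc, Unitary.conjStarAlgAut_apply, ← mulVec_mulVec, ← mulVec_mulVec,
    dotProduct_mulVec, hx]
  simp only [dotProduct, mulVec_diagonal, Pi.star_apply, star_eigenvectorUnitary_mulVec_apply,
    RCLike.ofReal_sum]
  refine Finset.sum_congr rfl fun i _ => ?_
  rw [RCLike.ofReal_mul, RCLike.ofReal_pow, ← RCLike.conj_mul, mul_left_comm]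
  rfl

lemma cfc_mulVec_eigenvectorBasis (f : ℝ → ℝ) (j : n) :
    cfc f A *ᵥ ⇑(hA.eigenvectorBasis j) =
      (f (hA.eigenvalues j) : 𝕜) • ⇑(hA.eigenvectorBasis j) := by
  rw [hA.cfc_eq, IsHermitian.cfc, Unitary.conjStarAlgAut_apply, ← mulVec_mulVec, ← mulVec_mulVec,
    star_eigenvectorUnitary_mulVec, diagonal_mulVec_single, ← smul_eq_mul, Pi.single_smul',
    mulVec_smul, eigenvectorUnitary_mulVec]
  simp

lemma trace_mul_eq_sum_eigenvalues (X : Matrix n n 𝕜) :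
    (X * A).trace = ∑ j, (hA.eigenvalues j : 𝕜) *
      (star ⇑(hA.eigenvectorBasis j) ⬝ᵥ (X *ᵥ ⇑(hA.eigenvectorBasis j))) := by
  let U : Matrix n n 𝕜 := hA.eigenvectorUnitary
  have hdiag (j : n) : (star U * X * U) j j =
      star ⇑(hA.eigenvectorBasis j) ⬝ᵥ (X *ᵥ ⇑(hA.eigenvectorBasis j)) := by
    rw [← star_eigenvectorUnitary_mulVec_apply, ← eigenvectorUnitary_mulVec, mulVec_mulVec,
      mulVec_mulVec, mulVec_single_one]
    rfl
  have hcycle :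
      (X * A).trace = (star U * X * U * diagonal (RCLike.ofReal ∘ hA.eigenvalues)).trace := by
    conv_lhs =>
      rw [hA.spectral_theorem, Unitary.conjStarAlgAut_apply, ← Matrix.mul_assoc, trace_mul_cycle]
    simp only [Matrix.mul_assoc, U]
  rw [hcycle, trace]
  simp only [diag_apply, mul_diagonal, hdiag, Function.comp_apply, mul_comm]

lemma eigenvalues_eq_of_map_ofReal {M : Matrix n n ℝ} (hM : M.IsHermitian) {M' : Matrix n n 𝕜}
    (hM' : M'.IsHermitian) (h : M.map (↑) = M') : hM'.eigenvalues = hM.eigenvalues := by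
  -- both are the roots of the common characteristic polynomial, sorted decreasingly
  suffices hM'.eigenvalues₀ = hM.eigenvalues₀ by unfold IsHermitian.eigenvalues; rw [this]
  have hroots : M'.charpoly.roots = M.charpoly.roots.map (↑) := by
    rw [← h, ← RCLike.ofRealAm_coe, ← RingHom.coe_coe, charpoly_map,
      hM.roots_charpoly_eq_eigenvalues, hM.charpoly_eq, Polynomial.map_prod,
      Polynomial.roots_prod _ _ (by simp [Finset.prod_ne_zero_iff, Polynomial.X_sub_C_ne_zero])]
    simp
  simp_rw [← List.ofFn_inj, ← IsHermitian.sort_roots_charpoly_eq_eigenvalues₀, hroots,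
    Multiset.map_map]
  simp

end Matrix.IsHermitian

lemma Matrix.PosSemidef.map_ofReal {M : Matrix n n ℝ} (hM : M.PosSemidef) :
    (M.map (↑) : Matrix n n 𝕜).PosSemidef := by
  have hM' : (M.map (↑) : Matrix n n 𝕜).IsHermitian :=
    hM.1.map _ fun r => (RCLike.conj_ofReal r).symm
  rw [hM'.posSemidef_iff_eigenvalues_nonneg, hM.1.eigenvalues_eq_of_map_ofReal hM' rfl]
  exact hM.eigenvalues_nonneg

lemma ConvexOn.map_re_dotProduct_mulVec_le {s : Set ℝ} {f : ℝ → ℝ} (hf : ConvexOn ℝ s f)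
    {A : Matrix n n 𝕜} (hA : A.IsHermitian) (hs : ∀ i, hA.eigenvalues i ∈ s) {x : n → 𝕜}
    (hx : star x ⬝ᵥ x = 1) :
    f (RCLike.re (star x ⬝ᵥ (A *ᵥ x))) ≤ RCLike.re (star x ⬝ᵥ (cfc f A *ᵥ x)) := by
  have hw : ∑ i, ‖star ⇑(hA.eigenvectorBasis i) ⬝ᵥ x‖ ^ 2 = 1 := by
    have h1 := hA.dotProduct_cfc_mulVec (fun _ => 1) x
    rw [cfc_const_one ℝ A, one_mulVec, hx] at h1
    simp only [one_mul] at h1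
    exact_mod_cast h1.symm
  conv_lhs => rw [← cfc_id' ℝ A, hA.dotProduct_cfc_mulVec]
  rw [hA.dotProduct_cfc_mulVec, RCLike.ofReal_re, RCLike.ofReal_re]
  simpa [mul_comm] using hf.map_sum_le (fun i _ => by positivity) hw (fun i _ => hs i)

namespace Matrix.PosSemidef

variable {A B : Matrix n n ℂ}

open scoped MatrixOrder Matrix.Norms.L2Operator in
lemma cfc_rpow_sub_cfc_rpow (hB : B.PosSemidef) (hBA : (A - B).PosSemidef) {p : ℝ}
    (hp : p ∈ Set.Icc (0 : ℝ) 1) :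
    (cfc (fun x : ℝ => x ^ p) A - cfc (fun x : ℝ => x ^ p) B).PosSemidef := by
  rw [← nonneg_iff_posSemidef] at hB
  have hAB : B ≤ A := le_iff.mpr hBA
  rw [← le_iff, ← CFC.rpow_eq_cfc_real hB, ← CFC.rpow_eq_cfc_real (hB.trans hAB)]
  exact CFC.rpow_le_rpow hp hAB

lemma eigenvalues_rpow_le_re_dotProduct_cfc_rpow (hB : B.PosSemidef) (hBA : (A - B).PosSemidef)
    {p : ℝ} (hp : 0 ≤ p) (j : n) :
    hB.1.eigenvalues j ^ p ≤ RCLike.re (star ⇑(hB.1.eigenvectorBasis j) ⬝ᵥ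
      (cfc (fun x : ℝ => x ^ p) A *ᵥ ⇑(hB.1.eigenvectorBasis j))) := by
  rcases le_total p 1 with hp1 | hp1
  · have h := (hB.cfc_rpow_sub_cfc_rpow hBA ⟨hp, hp1⟩).re_dotProduct_mulVec_le
      (hB.1.eigenvectorBasis j)
    rwa [hB.1.cfc_mulVec_eigenvectorBasis, dotProduct_smul,
      hB.1.star_eigenvectorBasis_dotProduct_self, smul_eq_mul, mul_one, RCLike.ofReal_re] at h
  · have hA : A.PosSemidef := by simpa using hB.add hBA
    calc hB.1.eigenvalues j ^ p
        ≤ RCLike.re (star ⇑(hB.1.eigenvectorBasis j) ⬝ᵥ (A *ᵥ ⇑(hB.1.eigenvectorBasis j))) ^ p := by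
          gcongr
          · exact hB.eigenvalues_nonneg j
          · rw [hB.1.eigenvalues_eq]
            exact hBA.re_dotProduct_mulVec_le _
      _ ≤ _ := (convexOn_rpow hp1).map_re_dotProduct_mulVec_le hA.1 hA.eigenvalues_nonneg
          (hB.1.star_eigenvectorBasis_dotProduct_self j)

lemma sum_eigenvalues_rpow_add_one_le_re_trace (hB : B.PosSemidef) (hBA : (A - B).PosSemidef)
    {p : ℝ} (hp : 0 ≤ p) :
    ∑ j, hB.1.eigenvalues j ^ (p + 1) ≤ RCLike.re (cfc (fun x : ℝ => x ^ p) A * B).trace := by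
  rw [hB.1.trace_mul_eq_sum_eigenvalues, map_sum]
  refine Finset.sum_le_sum fun j _ => ?_
  rw [RCLike.re_ofReal_mul, Real.rpow_add_one' (hB.eigenvalues_nonneg j) (by linarith), mul_comm]
  exact mul_le_mul_of_nonneg_left (hB.eigenvalues_rpow_le_re_dotProduct_cfc_rpow hBA hp j)
    (hB.eigenvalues_nonneg j)

lemma re_trace_cfc_rpow_mul_self (hA : A.PosSemidef) {p : ℝ} (hp : 0 ≤ p) :
    RCLike.re (cfc (fun x : ℝ => x ^ p) A * A).trace = ∑ i, hA.1.eigenvalues i ^ (p + 1) := by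
  rw [hA.1.trace_mul_eq_sum_eigenvalues, map_sum]
  refine Finset.sum_congr rfl fun j _ => ?_
  rw [hA.1.cfc_mulVec_eigenvectorBasis, dotProduct_smul, hA.1.star_eigenvectorBasis_dotProduct_self,
    smul_eq_mul, mul_one, ← RCLike.ofReal_mul, RCLike.ofReal_re,
    Real.rpow_add_one' (hA.eigenvalues_nonneg j) (by linarith), mul_comm]

theorem sum_eigenvalues_rpow_add_le {C : Matrix n n ℂ} (hB : B.PosSemidef) (hC : C.PosSemidef)
    {q : ℝ} (hq : 1 ≤ q) :
    ∑ i, hB.1.eigenvalues i ^ q + ∑ i, hC.1.eigenvalues i ^ q ≤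
      ∑ i, (hB.1.add hC.1).eigenvalues i ^ q := by
  obtain ⟨p, hp, rfl⟩ : ∃ p, 0 ≤ p ∧ q = p + 1 := ⟨q - 1, by linarith, by ring⟩
  have hBle := hB.sum_eigenvalues_rpow_add_one_le_re_trace (A := B + C) (by simpa using hC) hp
  have hCle := hC.sum_eigenvalues_rpow_add_one_le_re_trace (A := B + C) (by simpa using hB) hp
  have hsum := (hB.add hC).re_trace_cfc_rpow_mul_self hp
  rw [Matrix.mul_add, trace_add, map_add] at hsum
  linarith

end Matrix.PosSemidef

end

/-- For PSD matrices `B`, `C` and real `q ≥ 1`, `tr((B+C)^q) ≥ tr(B^q) + tr(C^q)`,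
where `tr(M^q)` for a PSD matrix `M` is defined spectrally as `∑ i, λᵢ(M) ^ q`. -/
theorem trace_rpow_add_ge_of_posSemidef {n : ℕ} (B C : Matrix (Fin n) (Fin n) ℝ)
    (hB : B.PosSemidef) (hC : C.PosSemidef) (q : ℝ) (hq : 1 ≤ q) :
    ∑ i, hB.isHermitian.eigenvalues i ^ q + ∑ i, hC.isHermitian.eigenvalues i ^ q ≤
      ∑ i, (hB.isHermitian.add hC.isHermitian).eigenvalues i ^ q := by
  have hB' : (B.map (↑) : Matrix (Fin n) (Fin n) ℂ).PosSemidef := hB.map_ofReal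
  have hC' : (C.map (↑) : Matrix (Fin n) (Fin n) ℂ).PosSemidef := hC.map_ofReal
  have h := hB'.sum_eigenvalues_rpow_add_le hC' hq
  rwa [hB.1.eigenvalues_eq_of_map_ofReal hB'.1 rfl, hC.1.eigenvalues_eq_of_map_ofReal hC'.1 rfl,
    (hB.1.add hC.1).eigenvalues_eq_of_map_ofReal (hB'.1.add hC'.1)
      (Matrix.map_add _ Complex.ofReal_add B C)] at h
end

section
/- For positive semidefinite matrices B and C of the same size and a real number 0 < q ≤ 1, tr((B + C)^q) ≤ tr(B^q) + tr(C^q). -/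
/-!
For `0 < q < 1`, `x ^ q` is, up to a positive constant, `∫₀^∞ t ^ (q - 1) * x / (x + t) dt`, so it
suffices to show that `X ↦ tr (X (X + t)⁻¹)` is subadditive on positive semidefinite matrices for
each `t > 0`. With `A = B + C`, `tr (A (A + t)⁻¹) = tr (B (A + t)⁻¹) + tr (C (A + t)⁻¹)`, and since
`(A + t)⁻¹ ≤ (B + t)⁻¹` by operator antitonicity of the inverse, the first term is at most
`tr (B (B + t)⁻¹)`; likewise for `C`. The case `q = 1` is additivity of the trace.
-/

open Matrix
open scoped MatrixOrder

namespace Matrix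

variable {ι 𝕜 : Type*} [Fintype ι] [DecidableEq ι] [RCLike 𝕜]

lemma IsHermitian.trace_cfc {A : Matrix ι ι 𝕜} (hA : A.IsHermitian) (f : ℝ → ℝ) :
    (cfc f A).trace = ∑ i, (f (hA.eigenvalues i) : 𝕜) := by
  rw [hA.cfc_eq, IsHermitian.cfc, Unitary.conjStarAlgAut_apply, trace_mul_cycle,
    Unitary.coe_star_mul_self, one_mul, trace_diagonal]
  rfl

lemma PosSemidef.trace_mul_nonneg {A B : Matrix ι ι ℝ} (hA : A.PosSemidef) (hB : B.PosSemidef) :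
    0 ≤ (A * B).trace := by
  obtain ⟨S, hS, rfl⟩ : ∃ S : Matrix ι ι ℝ, S.IsHermitian ∧ S * S = A :=
    ⟨CFC.sqrt A, (CFC.sqrt_nonneg A).posSemidef.isHermitian, CFC.sqrt_mul_sqrt_self A hA.nonneg⟩
  rw [mul_assoc, trace_mul_comm, mul_assoc]
  have := (hB.mul_mul_conjTranspose_same S).trace_nonneg
  rwa [hS.eq, mul_assoc] at this

lemma PosSemidef.trace_mul_le_trace_mul {A B C : Matrix ι ι ℝ} (hA : A.PosSemidef)
    (hBC : B ≤ C) : (A * B).trace ≤ (A * C).trace := by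
  have := hA.trace_mul_nonneg hBC
  rwa [Matrix.mul_sub, trace_sub, sub_nonneg] at this

lemma PosDef.inv_le_inv_of_le {P T : Matrix ι ι ℝ} (hP : P.PosDef) (hPT : P ≤ T) :
    T⁻¹ ≤ P⁻¹ := by
  set C := T - P
  have hC : C.PosSemidef := hPT
  have hT : T.PosDef := by simpa [C] using hP.add_posSemidef hC
  have hCP : (C + C * P⁻¹ * C).PosSemidef := by
    refine hC.add ?_
    simpa only [hC.isHermitian.eq] using hP.inv.posSemidef.mul_mul_conjTranspose_same C
  have hdiff : P⁻¹ - T⁻¹ = T⁻¹ * (C + C * P⁻¹ * C) * T⁻¹ᴴ := by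
    have hTPC : C + C * P⁻¹ * C = T * P⁻¹ * C := by
      rw [show T = P + C by simp [C], add_mul, add_mul, mul_nonsing_inv P hP.det_pos.ne'.isUnit,
        one_mul]
    rw [hTPC, hT.inv.isHermitian.eq, inv_sub_inv (iff_of_true hP.isUnit hT.isUnit),
      ← mul_assoc, ← mul_assoc, nonsing_inv_mul T hT.det_pos.ne'.isUnit, one_mul]
  rw [le_iff, hdiff]
  exact hCP.mul_mul_conjTranspose_same _

lemma PosSemidef.inv_add_smul_one_eq_cfc {A : Matrix ι ι ℝ} (hA : A.PosSemidef) {t : ℝ}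
    (ht : 0 < t) : (A + t • 1)⁻¹ = cfc (fun x => (x + t)⁻¹) A := by
  have hspec : ∀ x ∈ spectrum ℝ A, (x + t) * (x + t)⁻¹ = 1 := fun x hx =>
    mul_inv_cancel₀ (add_pos_of_nonneg_of_pos (spectrum_nonneg_of_nonneg hA.nonneg hx) ht).ne'
  have hAt : A + t • 1 = cfc (fun x => x + t) A := by
    rw [cfc_add_const t (fun x => x) A, cfc_id' ℝ A, Algebra.algebraMap_eq_smul_one]
  refine inv_eq_right_inv ?_
  rw [hAt, ← cfc_mul _ _ A (A.finite_real_spectrum.continuousOn _)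
    (A.finite_real_spectrum.continuousOn _), cfc_congr hspec, cfc_const_one ℝ A]

lemma PosSemidef.trace_mul_inv_add_smul_one {A : Matrix ι ι ℝ} (hA : A.PosSemidef) {t : ℝ}
    (ht : 0 < t) : (A * (A + t • 1)⁻¹).trace =
      ∑ i, hA.isHermitian.eigenvalues i / (hA.isHermitian.eigenvalues i + t) := by
  have h : A * (A + t • 1)⁻¹ = cfc (fun x => x / (x + t)) A := by
    simp_rw [hA.inv_add_smul_one_eq_cfc ht, div_eq_mul_inv]
    rw [cfc_mul _ _ A (A.finite_real_spectrum.continuousOn _)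
      (A.finite_real_spectrum.continuousOn _), cfc_id' ℝ A]
  rw [h, hA.isHermitian.trace_cfc]
  rfl

lemma PosSemidef.trace_add_mul_inv_add_smul_one_le {B C : Matrix ι ι ℝ} (hB : B.PosSemidef)
    (hC : C.PosSemidef) {t : ℝ} (ht : 0 < t) :
    ((B + C) * (B + C + t • 1)⁻¹).trace ≤
      (B * (B + t • 1)⁻¹).trace + (C * (C + t • 1)⁻¹).trace := by
  have hposDef {A : Matrix ι ι ℝ} (hA : A.PosSemidef) : (A + t • 1).PosDef :=
    PosDef.posSemidef_add hA (PosDef.one.smul ht)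
  rw [Matrix.add_mul, trace_add]
  gcongr
  · refine hB.trace_mul_le_trace_mul ((hposDef hB).inv_le_inv_of_le ?_)
    rwa [le_iff, add_sub_add_right_eq_sub, add_sub_cancel_left]
  · refine hC.trace_mul_le_trace_mul ((hposDef hC).inv_le_inv_of_le ?_)
    rwa [le_iff, add_sub_add_right_eq_sub, add_sub_cancel_right]

lemma PosSemidef.sum_eigenvalues_div_add_le {B C : Matrix ι ι ℝ} (hB : B.PosSemidef)
    (hC : C.PosSemidef) {t : ℝ} (ht : 0 < t) :
    ∑ i, (hB.add hC).isHermitian.eigenvalues i / ((hB.add hC).isHermitian.eigenvalues i + t) ≤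
      ∑ i, hB.isHermitian.eigenvalues i / (hB.isHermitian.eigenvalues i + t) +
        ∑ i, hC.isHermitian.eigenvalues i / (hC.isHermitian.eigenvalues i + t) := by
  rw [← (hB.add hC).trace_mul_inv_add_smul_one ht, ← hB.trace_mul_inv_add_smul_one ht,
    ← hC.trace_mul_inv_add_smul_one ht]
  exact hB.trace_add_mul_inv_add_smul_one_le hC ht

end Matrix

section
open Real MeasureTheory Set

variable {ι κ : Type*} [Fintype ι] [Fintype κ] {q : ℝ}

lemma sum_rpow_eq_const_mul_integral (hq : q ∈ Ioo 0 1) {x : ι → ℝ} (hx : ∀ i, 0 ≤ x i) :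
    ∑ i, x i ^ q = (∫ t in Ioi 0, rpowIntegrand₀₁ q t 1)⁻¹ *
      ∫ t in Ioi 0, ∑ i, rpowIntegrand₀₁ q t (x i) := by
  rw [integral_finsetSum _ fun i _ => integrableOn_rpowIntegrand₀₁_Ioi hq (hx i), Finset.mul_sum]
  exact Finset.sum_congr rfl fun i _ => rpow_eq_const_mul_integral hq (hx i)

lemma sum_rpowIntegrand₀₁_eq (hq : q ∈ Ioo 0 1) {x : ι → ℝ} (hx : ∀ i, 0 ≤ x i) {t : ℝ}
    (ht : 0 ≤ t) : ∑ i, rpowIntegrand₀₁ q t (x i) = t ^ (q - 1) * ∑ i, x i / (x i + t) := by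
  rw [Finset.mul_sum]
  refine Finset.sum_congr rfl fun i _ => ?_
  rw [rpowIntegrand₀₁_eq_pow_div hq ht (hx i), mul_div_assoc, add_comm]

lemma sum_rpow_le_of_forall_sum_div_add_le (hq : q ∈ Ioo 0 1) {x : ι → ℝ} {y : κ → ℝ}
    (hx : ∀ i, 0 ≤ x i) (hy : ∀ j, 0 ≤ y j)
    (h : ∀ t > 0, ∑ i, x i / (x i + t) ≤ ∑ j, y j / (y j + t)) :
    ∑ i, x i ^ q ≤ ∑ j, y j ^ q := by
  rw [sum_rpow_eq_const_mul_integral hq hx, sum_rpow_eq_const_mul_integral hq hy]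
  refine mul_le_mul_of_nonneg_left ?_ (inv_nonneg.2 (integral_rpowIntegrand₀₁_one_pos hq).le)
  refine setIntegral_mono_on
    (integrable_finsetSum _ fun i _ => integrableOn_rpowIntegrand₀₁_Ioi hq (hx i))
    (integrable_finsetSum _ fun j _ => integrableOn_rpowIntegrand₀₁_Ioi hq (hy j))
    measurableSet_Ioi fun t (ht : 0 < t) => ?_
  rw [sum_rpowIntegrand₀₁_eq hq hx ht.le, sum_rpowIntegrand₀₁_eq hq hy ht.le]
  exact mul_le_mul_of_nonneg_left (h t ht) (rpow_nonneg ht.le _)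

end

/-- For PSD matrices `B`, `C` and real `0 < q ≤ 1`, `tr((B+C)^q) ≤ tr(B^q) + tr(C^q)`,
where `tr(M^q)` for a PSD matrix `M` is defined spectrally as `∑ i, λᵢ(M) ^ q`. -/
theorem trace_rpow_add_le_of_posSemidef {n : ℕ} (B C : Matrix (Fin n) (Fin n) ℝ)
    (hB : B.PosSemidef) (hC : C.PosSemidef) (q : ℝ) (hq0 : 0 < q) (hq1 : q ≤ 1) :
    ∑ i, (hB.isHermitian.add hC.isHermitian).eigenvalues i ^ q ≤
      ∑ i, hB.isHermitian.eigenvalues i ^ q + ∑ i, hC.isHermitian.eigenvalues i ^ q := by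
  rcases hq1.lt_or_eq with hq1 | rfl
  · refine (sum_rpow_le_of_forall_sum_div_add_le (y := Sum.elim _ _) ⟨hq0, hq1⟩
      (hB.add hC).eigenvalues_nonneg (Sum.forall.2 ⟨hB.eigenvalues_nonneg, hC.eigenvalues_nonneg⟩)
      fun t ht => ?_).trans_eq (Fintype.sum_sum_type _)
    rw [Fintype.sum_sum_type]
    exact hB.sum_eigenvalues_div_add_le hC ht
  · have h := (hB.isHermitian.add hC.isHermitian).trace_eq_sum_eigenvalues
    rw [trace_add, hB.isHermitian.trace_eq_sum_eigenvalues,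
      hC.isHermitian.trace_eq_sum_eigenvalues] at h
    simpa using h.symm.le
end

section
/- For p ≥ 2, the Schatten p-norm is p-th power superadditive under row concatenation: if A is the vertical concatenation of X and Y, then ‖A‖_{S_p}^p ≥ ‖X‖_{S_p}^p + ‖Y‖_{S_p}^p. -/
/-!
Write `A` for the stacked matrix. Since `AᴴA` and `AAᴴ` have the same nonzero eigenvalues and
`x ^ (p / 2)` vanishes at `0`, `‖A‖_{S_p}^p` is the sum of the `p / 2`-th powers of the eigenvalues
of `AAᴴ`. This is the block matrix with diagonal blocks `XXᴴ` and `YYᴴ`. Conjugate it by the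
block-diagonal unitary `W` made of eigenvectors of these two blocks: the diagonal of the result
lists the eigenvalues of `XXᴴ` and of `YYᴴ`, and it is the image of the eigenvalue vector of `AAᴴ`
under the doubly stochastic matrix `(|(VᴴW)ᵢₖ|²)`, where `V` diagonalises `AAᴴ`. Since
`x ↦ x ^ (p / 2)` is convex for `p ≥ 2`, Jensen's inequality finishes the proof.
-/

open Matrix

/-- The Schatten `p`-norm of a real matrix `M` with `m` columns:
`(∑ i, σᵢ(M) ^ p) ^ (1/p)`, where the singular values `σᵢ(M)` are the square roots of
the eigenvalues of `MᴴM` (over `ℝ`, `Mᴴ = Mᵀ`). -/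
noncomputable def schattenNorm {N : Type*} [Fintype N] {m : ℕ} (p : ℝ)
    (M : Matrix N (Fin m) ℝ) : ℝ :=
  (∑ i, Real.sqrt ((Matrix.isHermitian_conjTranspose_mul_self M).eigenvalues i) ^ p) ^ (1 / p)

open Polynomial

theorem ConvexOn.sum_comp_mulVec_le {n : Type*} [Fintype n] [DecidableEq n] {s : Set ℝ}
    {f : ℝ → ℝ} (hf : ConvexOn ℝ s f) {S : Matrix n n ℝ} (hS : S ∈ doublyStochastic ℝ n)
    {x : n → ℝ} (hx : ∀ i, x i ∈ s) :
    ∑ i, f ((S *ᵥ x) i) ≤ ∑ i, f (x i) :=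
  calc ∑ i, f ((S *ᵥ x) i) ≤ ∑ i, (S *ᵥ (f ∘ x)) i := Finset.sum_le_sum fun i _ =>
        hf.map_sum_le (fun _ _ => nonneg_of_mem_doublyStochastic hS)
          (sum_row_of_mem_doublyStochastic hS i) (fun j _ => hx j)
    _ = ∑ i, f (x i) := sum_mulVec_of_mem_doublyStochastic hS

namespace Matrix

variable {𝕜 : Type*} [RCLike 𝕜] {m n : Type*} [Fintype m] [Fintype n]

theorem sum_eigenvalues_conjTranspose_mul_self_eq [DecidableEq m] [DecidableEq n]
    (A : Matrix m n 𝕜) {f : ℝ → ℝ} (hf : f 0 = 0) :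
    ∑ i, f ((isHermitian_conjTranspose_mul_self A).eigenvalues i) =
      ∑ j, f ((isHermitian_mul_conjTranspose_self A).eigenvalues j) := by
  have hroots := congrArg Polynomial.roots (charpoly_mul_comm' Aᴴ A)
  rw [roots_mul ((monic_X_pow _).mul (charpoly_monic _)).ne_zero,
    roots_mul ((monic_X_pow _).mul (charpoly_monic _)).ne_zero, roots_X_pow, roots_X_pow,
    (isHermitian_conjTranspose_mul_self A).roots_charpoly_eq_eigenvalues,
    (isHermitian_mul_conjTranspose_self A).roots_charpoly_eq_eigenvalues] at hroots
  simpa [Function.comp_def, Multiset.map_nsmul, Multiset.sum_nsmul, hf] using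
    congrArg (fun s => (s.map (f ∘ RCLike.re)).sum) hroots

theorem mul_conjTranspose_apply_self (U : Matrix n n 𝕜) (i : n) :
    (U * Uᴴ) i i = ((∑ j, ‖U i j‖ ^ 2 : ℝ) : 𝕜) := by
  simp [Matrix.mul_apply, RCLike.mul_conj]

theorem conjTranspose_mul_apply_self (U : Matrix n n 𝕜) (j : n) :
    (Uᴴ * U) j j = ((∑ i, ‖U i j‖ ^ 2 : ℝ) : 𝕜) := by
  simp [Matrix.mul_apply, RCLike.conj_mul]

variable [DecidableEq n]

theorem of_norm_sq_mem_doublyStochastic_of_mem_unitaryGroup {U : Matrix n n 𝕜}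
    (hU : U ∈ unitaryGroup n 𝕜) :
    of (fun i j => ‖U i j‖ ^ 2) ∈ doublyStochastic ℝ n := by
  refine mem_doublyStochastic_iff_sum.2 ⟨fun _ _ => sq_nonneg _, fun i => ?_, fun j => ?_⟩
  · have h := congrFun (congrFun (mem_unitaryGroup_iff.1 hU) i) i
    rw [star_eq_conjTranspose, mul_conjTranspose_apply_self, one_apply_eq] at h
    exact_mod_cast h
  · have h := congrFun (congrFun (mem_unitaryGroup_iff'.1 hU) j) j
    rw [star_eq_conjTranspose, conjTranspose_mul_apply_self, one_apply_eq] at h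
    exact_mod_cast h

namespace IsHermitian

theorem conjTranspose_mul_mul_apply_self {M : Matrix n n 𝕜} (hM : M.IsHermitian)
    (W : Matrix n n 𝕜) (k : n) :
    (Wᴴ * M * W) k k = ((∑ i, ‖((hM.eigenvectorUnitary : Matrix n n 𝕜)ᴴ * W) i k‖ ^ 2 *
      hM.eigenvalues i : ℝ) : 𝕜) := by
  set c := (hM.eigenvectorUnitary : Matrix n n 𝕜)ᴴ * W
  have hconj : Wᴴ * M * W = cᴴ * diagonal (RCLike.ofReal ∘ hM.eigenvalues) * c := by
    conv_lhs => rw [hM.spectral_theorem]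
    simp [c, Unitary.conjStarAlgAut_apply, Matrix.mul_assoc, star_eq_conjTranspose]
  rw [hconj]
  simp only [Matrix.mul_apply, diagonal_apply, conjTranspose_apply, Function.comp_apply, mul_ite,
    mul_zero, Finset.sum_ite_eq', Finset.mem_univ, if_true, RCLike.star_def]
  push_cast
  refine Finset.sum_congr rfl fun i _ => ?_
  rw [← RCLike.conj_mul]
  ring

theorem sum_comp_re_diag_conjTranspose_mul_mul_le {M : Matrix n n 𝕜} (hM : M.IsHermitian)
    {W : Matrix n n 𝕜} (hW : W ∈ unitaryGroup n 𝕜) {s : Set ℝ} {f : ℝ → ℝ}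
    (hf : ConvexOn ℝ s f) (hs : ∀ i, hM.eigenvalues i ∈ s) :
    ∑ k, f (RCLike.re ((Wᴴ * M * W) k k)) ≤ ∑ i, f (hM.eigenvalues i) := by
  set c := (hM.eigenvectorUnitary : Matrix n n 𝕜)ᴴ * W
  have hc : c ∈ unitaryGroup n 𝕜 := mul_mem (Unitary.star_mem hM.eigenvectorUnitary.2) hW
  have hS := transpose_mem_doublyStochastic_iff.2
    (of_norm_sq_mem_doublyStochastic_of_mem_unitaryGroup hc)
  convert hf.sum_comp_mulVec_le hS hs using 3 with k
  rw [hM.conjTranspose_mul_mul_apply_self, RCLike.ofReal_re]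
  simp [mulVec, dotProduct, c]

theorem sum_comp_eigenvalues_add_le_of_eq_fromBlocks [DecidableEq m]
    {B₁ : Matrix m m 𝕜} {C : Matrix m n 𝕜} {D : Matrix n m 𝕜} {B₂ : Matrix n n 𝕜}
    {M : Matrix (m ⊕ n) (m ⊕ n) 𝕜} (hM : M.IsHermitian) (h₁ : B₁.IsHermitian)
    (h₂ : B₂.IsHermitian) (hblocks : M = Matrix.fromBlocks B₁ C D B₂) {s : Set ℝ} {f : ℝ → ℝ}
    (hf : ConvexOn ℝ s f) (hs : ∀ i, hM.eigenvalues i ∈ s) :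
    ∑ i, f (h₁.eigenvalues i) + ∑ j, f (h₂.eigenvalues j) ≤ ∑ k, f (hM.eigenvalues k) := by
  subst hblocks
  set V₁ := (h₁.eigenvectorUnitary : Matrix m m 𝕜)
  set V₂ := (h₂.eigenvectorUnitary : Matrix n n 𝕜)
  have hW : Matrix.fromBlocks V₁ 0 0 V₂ ∈ unitaryGroup (m ⊕ n) 𝕜 := by
    rw [mem_unitaryGroup_iff', star_eq_conjTranspose, fromBlocks_conjTranspose,
      fromBlocks_multiply]
    simp [V₁, V₂, ← star_eq_conjTranspose]
  have hdiag₁ : V₁ᴴ * B₁ * V₁ = diagonal (RCLike.ofReal ∘ h₁.eigenvalues) := by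
    rw [← star_eq_conjTranspose]
    simpa [V₁] using h₁.conjStarAlgAut_star_eigenvectorUnitary
  have hdiag₂ : V₂ᴴ * B₂ * V₂ = diagonal (RCLike.ofReal ∘ h₂.eigenvalues) := by
    rw [← star_eq_conjTranspose]
    simpa [V₂] using h₂.conjStarAlgAut_star_eigenvectorUnitary
  have h := hM.sum_comp_re_diag_conjTranspose_mul_mul_le hW hf hs
  rw [fromBlocks_conjTranspose, fromBlocks_multiply, fromBlocks_multiply] at h
  simpa [Fintype.sum_sum_type, ← Matrix.mul_assoc, hdiag₁, hdiag₂] using h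

end IsHermitian

end Matrix

theorem schattenNorm_rpow_eq_sum {N : Type*} [Fintype N] {m : ℕ} {p : ℝ} (hp : p ≠ 0)
    (M : Matrix N (Fin m) ℝ) :
    schattenNorm p M ^ p = ∑ i, (isHermitian_conjTranspose_mul_self M).eigenvalues i ^ (p / 2) := by
  have hev := eigenvalues_conjTranspose_mul_self_nonneg M
  have hsum : 0 ≤ ∑ i, (isHermitian_conjTranspose_mul_self M).eigenvalues i ^ (p / 2) :=
    Finset.sum_nonneg fun i _ => Real.rpow_nonneg (hev i) _
  have hsqrt : ∀ i, Real.sqrt ((isHermitian_conjTranspose_mul_self M).eigenvalues i) ^ p =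
      (isHermitian_conjTranspose_mul_self M).eigenvalues i ^ (p / 2) := fun i => by
    rw [Real.sqrt_eq_rpow, ← Real.rpow_mul (hev i), one_div_mul_eq_div]
  simp only [schattenNorm, hsqrt]
  rw [← Real.rpow_mul hsum, one_div_mul_cancel hp, Real.rpow_one]

/-- For `p ≥ 2`, the Schatten p-norm is p-th power superadditive under row concatenation:
`‖[X; Y]‖_{S_p}^p ≥ ‖X‖_{S_p}^p + ‖Y‖_{S_p}^p`. -/
theorem schattenNorm_rpow_superadditive {n₁ n₂ m : ℕ}
    (X : Matrix (Fin n₁) (Fin m) ℝ) (Y : Matrix (Fin n₂) (Fin m) ℝ) (p : ℝ) (hp : 2 ≤ p) :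
    schattenNorm p X ^ p + schattenNorm p Y ^ p ≤
      schattenNorm p (Matrix.fromRows X Y) ^ p := by
  have hp₀ : p ≠ 0 := by positivity
  have hf₀ : (fun x : ℝ => x ^ (p / 2)) 0 = 0 := Real.zero_rpow (by positivity)
  simp only [schattenNorm_rpow_eq_sum hp₀,
    sum_eigenvalues_conjTranspose_mul_self_eq (f := fun x : ℝ => x ^ (p / 2)) _ hf₀]
  exact (isHermitian_mul_conjTranspose_self _).sum_comp_eigenvalues_add_le_of_eq_fromBlocks
    (isHermitian_mul_conjTranspose_self X) (isHermitian_mul_conjTranspose_self Y)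
    (by rw [conjTranspose_fromRows_eq_fromCols_conjTranspose, fromRows_mul_fromCols])
    (convexOn_rpow (by linarith)) (eigenvalues_self_mul_conjTranspose_nonneg _)
end

section
/- For 0 < p ≤ 2, the squared Schatten p-norm is superadditive under row concatenation: if A is the vertical concatenation of X and Y, then ‖A‖_{S_p}^2 ≥ ‖X‖_{S_p}^2 + ‖Y‖_{S_p}^2. -/
/-! Put `q = p / 2 ∈ (0, 1]`, so that `‖M‖_{S_p}² = ‖λ(MᵀM)‖_q` with `‖x‖_q = (∑ xᵢ^q)^{1/q}`.
Diagonalize `AᵀA = XᵀX + YᵀY` by an orthogonal `V`; the diagonals `a`, `b` of `Vᵀ XᵀX V` and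
`Vᵀ YᵀY V` then add up to `λ(AᵀA)`. If `W` is orthogonal and diagonalizes `XᵀX`, then `a` is the
image of `λ(XᵀX)` under the doubly stochastic matrix `Q ⊙ Q`, `Q = Vᵀ W`, so concavity of
`t ↦ t^q` gives `‖λ(XᵀX)‖_q ≤ ‖a‖_q`, and likewise for `b`. Finally `‖a‖_q + ‖b‖_q ≤ ‖a + b‖_q`
is the reverse Minkowski inequality for `q ≤ 1`. -/

open Finset Matrix

theorem ConcaveOn.sum_le_sum_mulVec_of_mem_doublyStochastic {𝕜 β n : Type*}
    [Field 𝕜] [LinearOrder 𝕜] [IsStrictOrderedRing 𝕜] [AddCommGroup β] [PartialOrder β]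
    [IsOrderedAddMonoid β] [Module 𝕜 β] [IsStrictOrderedModule 𝕜 β] [Fintype n] [DecidableEq n]
    {s : Set 𝕜} {f : 𝕜 → β} (hf : ConcaveOn 𝕜 s f) {D : Matrix n n 𝕜}
    (hD : D ∈ doublyStochastic 𝕜 n) {x : n → 𝕜} (hx : ∀ j, x j ∈ s) :
    ∑ j, f (x j) ≤ ∑ i, f ((D *ᵥ x) i) :=
  calc ∑ j, f (x j) = ∑ i, ∑ j, D i j • f (x j) := by
        rw [sum_comm]
        simp_rw [← sum_smul, sum_col_of_mem_doublyStochastic hD, one_smul]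
    _ ≤ ∑ i, f ((D *ᵥ x) i) := by
        gcongr with i
        exact hf.le_map_sum (fun j _ => nonneg_of_mem_doublyStochastic hD)
          (sum_row_of_mem_doublyStochastic hD i) (fun j _ => hx j)

namespace Matrix

variable {n : Type*} [Fintype n] [DecidableEq n]

theorem hadamard_self_mem_doublyStochastic {Q : Matrix n n ℝ} (hQ : Q ∈ unitaryGroup n ℝ) :
    Q ⊙ Q ∈ doublyStochastic ℝ n := by
  refine mem_doublyStochastic_iff_sum.mpr ⟨fun i j => mul_self_nonneg _, fun i => ?_, fun j => ?_⟩
  · simpa [mul_apply] using congrFun₂ (mem_unitaryGroup_iff.mp hQ) i i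
  · simpa [mul_apply] using congrFun₂ (mem_unitaryGroup_iff'.mp hQ) j j

theorem mul_diagonal_mul_star_apply_self (Q : Matrix n n ℝ) (d : n → ℝ) (i : n) :
    (Q * diagonal d * star Q) i i = (Q ⊙ Q *ᵥ d) i := by
  simp [mul_apply, diagonal_apply, mulVec, dotProduct, mul_comm, mul_left_comm]

theorem IsHermitian.sum_map_eigenvalues_le_sum_map_diag {β : Type*} [AddCommGroup β]
    [PartialOrder β] [IsOrderedAddMonoid β] [Module ℝ β] [IsStrictOrderedModule ℝ β]
    {S : Matrix n n ℝ} (hS : S.IsHermitian) {V : Matrix n n ℝ} (hV : V ∈ unitaryGroup n ℝ)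
    {s : Set ℝ} {f : ℝ → β} (hf : ConcaveOn ℝ s f) (hs : ∀ j, hS.eigenvalues j ∈ s) :
    ∑ j, f (hS.eigenvalues j) ≤ ∑ i, f ((star V * S * V) i i) := by
  set W : Matrix n n ℝ := (hS.eigenvectorUnitary : Matrix n n ℝ)
  have hSW : star V * S * V = (star V * W) * diagonal hS.eigenvalues * star (star V * W) := by
    conv_lhs => rw [hS.spectral_theorem, Unitary.conjStarAlgAut_apply]
    simp only [W, star_mul, star_star, mul_assoc]
    rfl
  simp_rw [hSW, mul_diagonal_mul_star_apply_self]
  exact hf.sum_le_sum_mulVec_of_mem_doublyStochastic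
    (hadamard_self_mem_doublyStochastic (mul_mem (Unitary.star_mem hV) hS.eigenvectorUnitary.2)) hs

theorem IsHermitian.star_eigenvectorUnitary_mul_mul_eigenvectorUnitary {S : Matrix n n ℝ}
    (hS : S.IsHermitian) :
    star (hS.eigenvectorUnitary : Matrix n n ℝ) * S * hS.eigenvectorUnitary =
      diagonal hS.eigenvalues := by
  have h := hS.conjStarAlgAut_star_eigenvectorUnitary
  rwa [Unitary.conjStarAlgAut_apply, Unitary.coe_star, star_star] at h

theorem PosSemidef.Lp_eigenvalues_le_Lp_diag {S : Matrix n n ℝ} (hS : S.PosSemidef)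
    {V : Matrix n n ℝ} (hV : V ∈ unitaryGroup n ℝ) {q : ℝ} (hq0 : 0 < q) (hq1 : q ≤ 1) :
    (∑ j, hS.1.eigenvalues j ^ q) ^ (1 / q) ≤ (∑ i, (star V * S * V) i i ^ q) ^ (1 / q) := by
  gcongr ?_ ^ _
  · exact sum_nonneg fun j _ => Real.rpow_nonneg (hS.eigenvalues_nonneg j) q
  · exact hS.1.sum_map_eigenvalues_le_sum_map_diag hV (Real.concaveOn_rpow hq0.le hq1)
      hS.eigenvalues_nonneg

end Matrix

theorem Real.Lp_add_Lp_le_Lp_add_of_le_one {ι : Type*} (s : Finset ι) {q : ℝ} (hq0 : 0 < q)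
    (hq1 : q ≤ 1) {a b : ι → ℝ} (ha : ∀ i ∈ s, 0 ≤ a i) (hb : ∀ i ∈ s, 0 ≤ b i) :
    (∑ i ∈ s, a i ^ q) ^ (1 / q) + (∑ i ∈ s, b i ^ q) ^ (1 / q) ≤
      (∑ i ∈ s, (a i + b i) ^ q) ^ (1 / q) := by
  -- The triangle inequality in `ℓ^{1/q}(Fin 2)` for the vectors `(a i ^ q, b i ^ q)`.
  set r : ENNReal := ENNReal.ofReal q⁻¹
  have hr : r.toReal = q⁻¹ := ENNReal.toReal_ofReal (by positivity)
  have : Fact (1 ≤ r) := ⟨by simpa [r] using (one_le_inv₀ hq0).mpr hq1⟩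
  have hnorm : ∀ u v : ℝ, 0 ≤ u → 0 ≤ v →
      ‖(WithLp.toLp r ![u ^ q, v ^ q] : PiLp r fun _ : Fin 2 => ℝ)‖ = (u + v) ^ q := by
    intro u v hu hv
    rw [PiLp.norm_eq_sum (by rw [hr]; positivity)]
    simp [Fin.sum_univ_two, hr, abs_of_nonneg, Real.rpow_nonneg, hu, hv, Real.rpow_rpow_inv,
      hq0.ne']
  set A := (∑ i ∈ s, a i ^ q) ^ (1 / q)
  set B := (∑ i ∈ s, b i ^ q) ^ (1 / q)
  have hSa : 0 ≤ ∑ i ∈ s, a i ^ q := sum_nonneg fun i hi => Real.rpow_nonneg (ha i hi) q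
  have hSb : 0 ≤ ∑ i ∈ s, b i ^ q := sum_nonneg fun i hi => Real.rpow_nonneg (hb i hi) q
  have hA0 : 0 ≤ A := Real.rpow_nonneg hSa _
  have hB0 : 0 ≤ B := Real.rpow_nonneg hSb _
  have hA : A ^ q = ∑ i ∈ s, a i ^ q := by
    simp only [A, one_div, Real.rpow_inv_rpow hSa hq0.ne']
  have hB : B ^ q = ∑ i ∈ s, b i ^ q := by
    simp only [B, one_div, Real.rpow_inv_rpow hSb hq0.ne']
  have hsum : ∑ i ∈ s, (WithLp.toLp r ![a i ^ q, b i ^ q] : PiLp r fun _ : Fin 2 => ℝ) =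
      WithLp.toLp r ![A ^ q, B ^ q] := by
    ext k
    fin_cases k <;> simp [hA, hB]
  have htriangle : (A + B) ^ q ≤ ∑ i ∈ s, (a i + b i) ^ q := by
    rw [← hnorm A B hA0 hB0, ← hsum]
    exact (norm_sum_le _ _).trans_eq (sum_congr rfl fun i hi => hnorm _ _ (ha i hi) (hb i hi))
  calc A + B = ((A + B) ^ q) ^ (1 / q) := by
        rw [one_div, Real.rpow_rpow_inv (add_nonneg hA0 hB0) hq0.ne']
    _ ≤ _ := by gcongr

theorem schattenNorm_rpow_two {N : Type*} [Fintype N] {m : ℕ} {p : ℝ} (hp : 0 < p)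
    (M : Matrix N (Fin m) ℝ) :
    schattenNorm p M ^ (2 : ℝ) =
      (∑ i, (isHermitian_conjTranspose_mul_self M).eigenvalues i ^ (p / 2)) ^ (1 / (p / 2)) := by
  have heig := eigenvalues_conjTranspose_mul_self_nonneg M
  have hsqrt : ∀ i, √((isHermitian_conjTranspose_mul_self M).eigenvalues i) ^ p =
      (isHermitian_conjTranspose_mul_self M).eigenvalues i ^ (p / 2) := fun i => by
    rw [Real.sqrt_eq_rpow, ← Real.rpow_mul (heig i), one_div_mul_eq_div]
  rw [schattenNorm, funext hsqrt,
    ← Real.rpow_mul (sum_nonneg fun i _ => Real.rpow_nonneg (heig i) _)]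
  congr 1
  field_simp

/-- For `0 < p ≤ 2`, the squared Schatten p-norm is superadditive under row concatenation:
`‖[X; Y]‖_{S_p}² ≥ ‖X‖_{S_p}² + ‖Y‖_{S_p}²`. -/
theorem schattenNorm_sq_superadditive {n₁ n₂ m : ℕ}
    (X : Matrix (Fin n₁) (Fin m) ℝ) (Y : Matrix (Fin n₂) (Fin m) ℝ)
    (p : ℝ) (hp0 : 0 < p) (hp2 : p ≤ 2) :
    schattenNorm p X ^ (2 : ℝ) + schattenNorm p Y ^ (2 : ℝ) ≤
      schattenNorm p (Matrix.fromRows X Y) ^ (2 : ℝ) := by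
  have hq0 : 0 < p / 2 := by positivity
  have hq1 : p / 2 ≤ 1 := by linarith
  have hA := isHermitian_conjTranspose_mul_self (fromRows X Y)
  set V : Matrix (Fin m) (Fin m) ℝ := (hA.eigenvectorUnitary : Matrix (Fin m) (Fin m) ℝ)
  have hV : V ∈ unitaryGroup (Fin m) ℝ := hA.eigenvectorUnitary.2
  have hX := posSemidef_conjTranspose_mul_self X
  have hY := posSemidef_conjTranspose_mul_self Y
  have hdiag : ∀ i, (star V * (Xᴴ * X) * V) i i + (star V * (Yᴴ * Y) * V) i i =
      hA.eigenvalues i := fun i => by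
    have hsplit : star V * (Xᴴ * X) * V + star V * (Yᴴ * Y) * V =
        star V * ((fromRows X Y)ᴴ * fromRows X Y) * V := by
      rw [conjTranspose_fromRows_eq_fromCols_conjTranspose, fromCols_mul_fromRows, mul_add,
        add_mul]
    simpa using congrFun₂ (hsplit.trans hA.star_eigenvectorUnitary_mul_mul_eigenvectorUnitary) i i
  rw [schattenNorm_rpow_two hp0, schattenNorm_rpow_two hp0, schattenNorm_rpow_two hp0]
  calc _ ≤ (∑ i, (star V * (Xᴴ * X) * V) i i ^ (p / 2)) ^ (1 / (p / 2)) +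
        (∑ i, (star V * (Yᴴ * Y) * V) i i ^ (p / 2)) ^ (1 / (p / 2)) :=
        add_le_add (hX.Lp_eigenvalues_le_Lp_diag hV hq0 hq1)
          (hY.Lp_eigenvalues_le_Lp_diag hV hq0 hq1)
    _ ≤ _ := Real.Lp_add_Lp_le_Lp_add_of_le_one _ hq0 hq1
        (fun i _ => (hX.conjTranspose_mul_mul_same V).diag_nonneg)
        (fun i _ => (hY.conjTranspose_mul_mul_same V).diag_nonneg)
    _ = _ := by simp_rw [hdiag]
end

section
/- For 0 < p ≤ 2 and A the vertical concatenation of X and Y, the p-th power of the Schatten p-norm is subadditive: ‖A‖_{S_p}^p ≤ ‖X‖_{S_p}^p + ‖Y‖_{S_p}^p. -/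
open Matrix
section McCarthyAux
open MeasureTheory Set
variable {m : ℕ}



lemma spectral_real {A : Matrix (Fin m) (Fin m) ℝ} (hA : A.IsHermitian) :
    A = (hA.eigenvectorUnitary : Matrix (Fin m) (Fin m) ℝ) * diagonal hA.eigenvalues
        * star (hA.eigenvectorUnitary : Matrix (Fin m) (Fin m) ℝ) := by
  have := hA.spectral_theorem
  simpa using this

lemma shift_spectral {A : Matrix (Fin m) (Fin m) ℝ} (hA : A.IsHermitian) (x : ℝ) :
    A + x • 1 = (hA.eigenvectorUnitary : Matrix (Fin m) (Fin m) ℝ)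
        * diagonal (fun i => hA.eigenvalues i + x)
        * star (hA.eigenvectorUnitary : Matrix (Fin m) (Fin m) ℝ) := by
  set U := (hA.eigenvectorUnitary : Matrix (Fin m) (Fin m) ℝ) with hUdef
  have hU2 : U * star U = 1 := (Matrix.mem_unitaryGroup_iff).mp (hA.eigenvectorUnitary).2
  have h1 : diagonal (fun i => hA.eigenvalues i + x)
      = diagonal hA.eigenvalues + x • 1 := by
    ext i j
    by_cases h : i = j <;> simp [h, diagonal_apply, Matrix.one_apply, Matrix.smul_apply]
  rw [h1, mul_add, add_mul]
  congr 1
  · exact spectral_real hA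
  · rw [mul_smul_comm, smul_mul_assoc, mul_one, hU2]

lemma conj_trace' (U : Matrix (Fin m) (Fin m) ℝ) (hU : star U * U = 1) (d : Fin m → ℝ) :
    (U * diagonal d * star U).trace = ∑ i, d i := by
  rw [trace_mul_comm, ← mul_assoc, hU, one_mul, trace_diagonal]

lemma conj_inv'' (U : Matrix (Fin m) (Fin m) ℝ) (hU : star U * U = 1) (hU2 : U * star U = 1)
    (d : Fin m → ℝ) (hd : ∀ i, d i ≠ 0) :
    (U * diagonal d * star U)⁻¹ = U * diagonal (fun i => (d i)⁻¹) * star U := by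
  apply Matrix.inv_eq_left_inv
  calc (U * diagonal (fun i => (d i)⁻¹) * star U) * (U * diagonal d * star U)
      = U * (diagonal (fun i => (d i)⁻¹) * ((star U * U) * diagonal d)) * star U := by
        simp [Matrix.mul_assoc]
    _ = 1 := by
        rw [hU, one_mul, diagonal_mul_diagonal]
        simp [fun i => inv_mul_cancel₀ (hd i), hU2]

lemma conj_mul_conj (U : Matrix (Fin m) (Fin m) ℝ) (hU : star U * U = 1)
    (d e : Fin m → ℝ) :
    (U * diagonal d * star U) * (U * diagonal e * star U)
      = U * diagonal (fun i => d i * e i) * star U := by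
  rw [← diagonal_mul_diagonal]
  calc (U * diagonal d * star U) * (U * diagonal e * star U)
      = U * (diagonal d * ((star U * U) * diagonal e)) * star U := by
        simp [Matrix.mul_assoc]
    _ = _ := by rw [hU, one_mul]

lemma shift_conj (U : Matrix (Fin m) (Fin m) ℝ) (hU2 : U * star U = 1)
    (d : Fin m → ℝ) (x : ℝ) :
    U * diagonal d * star U + x • 1 = U * diagonal (fun i => d i + x) * star U := by
  have h1 : diagonal (fun i => d i + x) = diagonal d + x • (1 : Matrix (Fin m) (Fin m) ℝ) := by
    ext i j
    by_cases h : i = j <;> simp [h, diagonal_apply, Matrix.one_apply, Matrix.smul_apply]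
  rw [h1, mul_add, add_mul]
  congr 1
  rw [mul_smul_comm, smul_mul_assoc, mul_one, hU2]

lemma trace_formula (U : Matrix (Fin m) (Fin m) ℝ) (hU : star U * U = 1)
    (hU2 : U * star U = 1) (v : Fin m → ℝ) {x : ℝ} (hd : ∀ i, v i + x ≠ 0)
    (A : Matrix (Fin m) (Fin m) ℝ) (hAeq : A = U * diagonal v * star U) :
    (A * (A + x • 1)⁻¹).trace = ∑ i, v i * (v i + x)⁻¹ := by
  subst hAeq
  rw [shift_conj U hU2, conj_inv'' U hU hU2 _ hd, conj_mul_conj U hU, conj_trace' U hU]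

lemma resolvent_trace {A : Matrix (Fin m) (Fin m) ℝ} (hA : A.PosSemidef) {x : ℝ} (hx : 0 < x) :
    (A * (A + x • 1)⁻¹).trace = ∑ i, hA.1.eigenvalues i * (hA.1.eigenvalues i + x)⁻¹ := by
  have hU : star (hA.1.eigenvectorUnitary : Matrix (Fin m) (Fin m) ℝ)
      * (hA.1.eigenvectorUnitary : Matrix (Fin m) (Fin m) ℝ) = 1 :=
    (Matrix.mem_unitaryGroup_iff').mp (hA.1.eigenvectorUnitary).2
  have hU2 : (hA.1.eigenvectorUnitary : Matrix (Fin m) (Fin m) ℝ)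
      * star (hA.1.eigenvectorUnitary : Matrix (Fin m) (Fin m) ℝ) = 1 :=
    (Matrix.mem_unitaryGroup_iff).mp (hA.1.eigenvectorUnitary).2
  have hd : ∀ i, hA.1.eigenvalues i + x ≠ 0 := fun i =>
    (lt_of_lt_of_le hx (by linarith [hA.eigenvalues_nonneg i])).ne'
  exact trace_formula _ hU hU2 _ hd A (spectral_real hA.1)



lemma psd_trace_nonneg {A : Matrix (Fin m) (Fin m) ℝ} (hA : A.PosSemidef) : 0 ≤ A.trace := by
  rw [Matrix.trace]
  apply Finset.sum_nonneg
  intro i _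
  exact hA.diag_nonneg

lemma trace_mul_nonneg {A D : Matrix (Fin m) (Fin m) ℝ} (hA : A.PosSemidef) (hD : D.PosSemidef) :
    0 ≤ (A * D).trace := by
  have hA' := spectral_real hA.1
  set U := (hA.1.eigenvectorUnitary : Matrix (Fin m) (Fin m) ℝ) with hUdef
  have hM : (star U * D * U).PosSemidef := by
    simpa [Matrix.star_eq_conjTranspose] using hD.conjTranspose_mul_mul_same U
  have h1 : A * D = U * (diagonal hA.1.eigenvalues * (star U * D)) := by
    conv_lhs => rw [hA']
    simp [Matrix.mul_assoc]
  rw [h1, trace_mul_comm, Matrix.mul_assoc]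
  rw [Matrix.trace]
  apply Finset.sum_nonneg
  intro i _
  simp only [diag_apply, diagonal_mul]
  exact mul_nonneg (hA.eigenvalues_nonneg i) hM.diag_nonneg

lemma herm_transpose {A : Matrix (Fin m) (Fin m) ℝ} (hA : A.IsHermitian) : Aᵀ = A := by
  simpa using hA.eq

lemma dot_symm {A : Matrix (Fin m) (Fin m) ℝ} (hA : A.IsHermitian) (x y : Fin m → ℝ) :
    x ⬝ᵥ (A *ᵥ y) = (A *ᵥ x) ⬝ᵥ y := by
  rw [dotProduct_mulVec, ← herm_transpose hA, mulVec_transpose, herm_transpose hA]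

lemma inv_antitone {A B : Matrix (Fin m) (Fin m) ℝ} (hA : A.PosDef) (hB : B.PosDef)
    (hAB : (B - A).PosSemidef) : (A⁻¹ - B⁻¹).PosSemidef := by
  have hAdet : IsUnit A.det := isUnit_iff_ne_zero.mpr hA.det_pos.ne'
  have hBdet : IsUnit B.det := isUnit_iff_ne_zero.mpr hB.det_pos.ne'
  have hAinv : A * A⁻¹ = 1 := Matrix.mul_nonsing_inv A hAdet
  have hBinv : B * B⁻¹ = 1 := Matrix.mul_nonsing_inv B hBdet
  refine PosSemidef.of_dotProduct_mulVec_nonneg ((hA.inv.1).sub (hB.inv.1)) fun v => ?_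
  have hstar : star v = v := by simp
  rw [hstar, sub_mulVec, dotProduct_sub]
  set w := B⁻¹ *ᵥ v with hw
  have hBw : B *ᵥ w = v := by rw [hw, mulVec_mulVec, hBinv, one_mulVec]
  have hAAv : A *ᵥ (A⁻¹ *ᵥ v) = v := by rw [mulVec_mulVec, hAinv, one_mulVec]
  have key1 : 0 ≤ w ⬝ᵥ (B *ᵥ w) - w ⬝ᵥ (A *ᵥ w) := by
    have := hAB.dotProduct_mulVec_nonneg w
    simpa [sub_mulVec, dotProduct_sub] using this
  have key2 : 0 ≤ (w - A⁻¹ *ᵥ v) ⬝ᵥ (A *ᵥ (w - A⁻¹ *ᵥ v)) := by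
    have := hA.posSemidef.dotProduct_mulVec_nonneg (w - A⁻¹ *ᵥ v)
    simpa using this
  have expand : (w - A⁻¹ *ᵥ v) ⬝ᵥ (A *ᵥ (w - A⁻¹ *ᵥ v))
      = w ⬝ᵥ (A *ᵥ w) - w ⬝ᵥ v - v ⬝ᵥ w + v ⬝ᵥ (A⁻¹ *ᵥ v) := by
    rw [mulVec_sub, hAAv, dotProduct_sub, sub_dotProduct, sub_dotProduct]
    have h1 : (A⁻¹ *ᵥ v) ⬝ᵥ (A *ᵥ w) = v ⬝ᵥ w := by
      rw [dot_symm hA.1, hAAv]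
    have h2 : (A⁻¹ *ᵥ v) ⬝ᵥ v = v ⬝ᵥ (A⁻¹ *ᵥ v) := dotProduct_comm _ _
    rw [h1, h2]
    ring
  have hwv : w ⬝ᵥ v = w ⬝ᵥ (B *ᵥ w) := by rw [hBw]
  have hvw : v ⬝ᵥ w = w ⬝ᵥ v := dotProduct_comm _ _
  rw [expand] at key2
  linarith

lemma smul_one_posDef {x : ℝ} (hx : 0 < x) : (x • (1 : Matrix (Fin m) (Fin m) ℝ)).PosDef := by
  have h : x • (1 : Matrix (Fin m) (Fin m) ℝ) = Matrix.diagonal (fun _ => x) := by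
    ext i j
    by_cases h : i = j <;> simp [h, diagonal_apply, Matrix.one_apply, Matrix.smul_apply]
  rw [h]
  exact posDef_diagonal_iff.mpr (fun _ => hx)

lemma shift_posDef {A : Matrix (Fin m) (Fin m) ℝ} (hA : A.PosSemidef) {x : ℝ} (hx : 0 < x) :
    (A + x • 1).PosDef :=
  Matrix.PosDef.posSemidef_add hA (smul_one_posDef hx)

lemma trace_mono_right {A R R' : Matrix (Fin m) (Fin m) ℝ} (hA : A.PosSemidef)
    (h : (R - R').PosSemidef) : (A * R').trace ≤ (A * R).trace := by
  have h0 : 0 ≤ (A * (R - R')).trace := trace_mul_nonneg hA h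
  rw [Matrix.mul_sub, trace_sub] at h0
  linarith

lemma perx {A B : Matrix (Fin m) (Fin m) ℝ} (hA : A.PosSemidef) (hB : B.PosSemidef)
    {x : ℝ} (hx : 0 < x) :
    ∑ i, (hA.add hB).1.eigenvalues i * ((hA.add hB).1.eigenvalues i + x)⁻¹ ≤
      (∑ i, hA.1.eigenvalues i * (hA.1.eigenvalues i + x)⁻¹) +
      ∑ i, hB.1.eigenvalues i * (hB.1.eigenvalues i + x)⁻¹ := by
  have hC : (A + B).PosSemidef := hA.add hB
  have hApd := shift_posDef hA hx
  have hCpd := shift_posDef hC hx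
  have hBpd := shift_posDef hB hx
  have hdiffA : ((A + B + x • 1) - (A + x • 1)).PosSemidef := by
    have : (A + B + x • 1) - (A + x • 1) = B := by abel
    rw [this]; exact hB
  have hdiffB : ((A + B + x • 1) - (B + x • 1)).PosSemidef := by
    have : (A + B + x • 1) - (B + x • 1) = A := by abel
    rw [this]; exact hA
  have hAle : (A * (A + B + x • 1)⁻¹).trace ≤ (A * (A + x • 1)⁻¹).trace :=
    trace_mono_right hA (inv_antitone hApd hCpd hdiffA)
  have hBle : (B * (A + B + x • 1)⁻¹).trace ≤ (B * (B + x • 1)⁻¹).trace :=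
    trace_mono_right hB (inv_antitone hBpd hCpd hdiffB)
  have hsplit : ((A + B) * (A + B + x • 1)⁻¹).trace
      = (A * (A + B + x • 1)⁻¹).trace + (B * (A + B + x • 1)⁻¹).trace := by
    rw [Matrix.add_mul, trace_add]
  have e1 := resolvent_trace hA hx
  have e2 := resolvent_trace hB hx
  have e3 := resolvent_trace hC hx
  rw [← e1, ← e2, ← e3, hsplit]
  linarith


noncomputable def fmu (r μ : ℝ) : ℝ → ℝ := fun x => x ^ (r - 1) * (μ * (μ + x)⁻¹)

lemma fmu_nonneg {r μ : ℝ} (hμ : 0 ≤ μ) {x : ℝ} (hx : 0 < x) : 0 ≤ fmu r μ x := by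
  have h1 : (0:ℝ) ≤ x ^ (r-1) := Real.rpow_nonneg hx.le _
  have h2 : (0:ℝ) ≤ (μ + x)⁻¹ := by positivity
  unfold fmu
  positivity

lemma fmu_meas {r μ : ℝ} : Measurable (fmu r μ) := by
  unfold fmu
  fun_prop

lemma fmu_integrable {r : ℝ} (hr0 : 0 < r) (hr1 : r < 1) {μ : ℝ} (hμ : 0 ≤ μ) :
    IntegrableOn (fmu r μ) (Ioi 0) := by
  have hmeas : Measurable (fmu r μ) := fmu_meas
  have hsplit : Ioc (0:ℝ) 1 ∪ Ioi 1 = Ioi 0 := Ioc_union_Ioi_eq_Ioi zero_le_one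
  rw [← hsplit]
  apply IntegrableOn.union
  · -- near 0 : dominate by x ^ (r-1)
    have hg : IntegrableOn (fun x : ℝ => x ^ (r - 1)) (Ioc 0 1) := by
      have h := intervalIntegral.intervalIntegrable_rpow' (r := r - 1) (by linarith) (a := 0) (b := 1)
      rwa [intervalIntegrable_iff_integrableOn_Ioc_of_le zero_le_one] at h
    apply hg.mono' (hmeas.aestronglyMeasurable.restrict)
    filter_upwards [ae_restrict_mem measurableSet_Ioc] with x hx
    have hx0 : 0 < x := hx.1
    have h1 : μ * (μ + x)⁻¹ ≤ 1 := by
      rw [mul_inv_le_iff₀ (by linarith)]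
      linarith
    have h2 : 0 ≤ μ * (μ + x)⁻¹ := by positivity
    rw [Real.norm_eq_abs, abs_of_nonneg (fmu_nonneg hμ hx0)]
    calc fmu r μ x ≤ x ^ (r-1) * 1 := by
          unfold fmu
          exact mul_le_mul_of_nonneg_left h1 (Real.rpow_nonneg hx0.le _)
      _ = x ^ (r-1) := mul_one _
  · -- near ∞ : dominate by μ * x ^ (r-2)
    have hg : IntegrableOn (fun x : ℝ => μ * x ^ (r - 2)) (Ioi 1) :=
      (integrableOn_Ioi_rpow_of_lt (by linarith) one_pos).const_mul μ
    apply hg.mono' (hmeas.aestronglyMeasurable.restrict)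
    filter_upwards [ae_restrict_mem measurableSet_Ioi] with x hx
    have hx0 : (0:ℝ) < x := lt_trans one_pos hx
    rw [Real.norm_eq_abs, abs_of_nonneg (fmu_nonneg hμ hx0)]
    have h1 : (μ + x)⁻¹ ≤ x⁻¹ := by
      apply inv_anti₀ hx0
      linarith
    calc fmu r μ x ≤ x ^ (r-1) * (μ * x⁻¹) := by
          unfold fmu
          refine mul_le_mul_of_nonneg_left ?_ (Real.rpow_nonneg hx0.le _)
          exact mul_le_mul_of_nonneg_left h1 hμ
      _ = μ * (x ^ (r-1) * x⁻¹) := by ring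
      _ = μ * x ^ (r-2) := by
          rw [← Real.rpow_neg_one x, ← Real.rpow_add hx0, show r - 1 + -1 = r - 2 by ring]

noncomputable def crc (r : ℝ) : ℝ := ∫ x in Ioi (0:ℝ), fmu r 1 x

lemma crc_pos {r : ℝ} (hr0 : 0 < r) (hr1 : r < 1) : 0 < crc r := by
  have hint : IntegrableOn (fmu r 1) (Ioi 0) := fmu_integrable hr0 hr1 zero_le_one
  have hsub : Ioc (1:ℝ) 2 ⊆ Ioi 0 := fun x hx => lt_trans one_pos hx.1
  have hlow : ∀ x ∈ Ioc (1:ℝ) 2, (2:ℝ) ^ (r-1) * 3⁻¹ ≤ fmu r 1 x := by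
    intro x hx
    have hx0 : (0:ℝ) < x := lt_trans one_pos hx.1
    have h1 : (2:ℝ) ^ (r-1) ≤ x ^ (r-1) :=
      Real.rpow_le_rpow_of_nonpos hx0 hx.2 (by linarith)
    have h2 : (3:ℝ)⁻¹ ≤ 1 * (1 + x)⁻¹ := by
      rw [one_mul]
      apply inv_anti₀ (by linarith [hx.1] : (0:ℝ) < 1 + x)
      linarith [hx.2]
    have h3 : (0:ℝ) ≤ x ^ (r-1) := Real.rpow_nonneg hx0.le _
    calc (2:ℝ) ^ (r-1) * 3⁻¹ ≤ x ^ (r-1) * (1 * (1+x)⁻¹) := by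
          apply mul_le_mul h1 h2 (by norm_num) h3
      _ = fmu r 1 x := rfl
  have hmeas2 : volume (Ioc (1:ℝ) 2) ≠ ⊤ := by simp
  have hge := setIntegral_ge_of_const_le measurableSet_Ioc hmeas2 hlow
      (hint.mono_set hsub)
  have hvol : volume.real (Ioc (1:ℝ) 2) = 1 := by
    rw [Real.volume_real_Ioc]
    norm_num
  rw [hvol, one_smul] at hge
  have hpos : (0:ℝ) < (2:ℝ) ^ (r-1) * 3⁻¹ := by positivity
  have hmono : ∫ x in Ioc (1:ℝ) 2, fmu r 1 x ≤ ∫ x in Ioi 0, fmu r 1 x := by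
    apply setIntegral_mono_set hint
    · filter_upwards [ae_restrict_mem measurableSet_Ioi] with x hx
      exact fmu_nonneg zero_le_one hx
    · exact HasSubset.Subset.eventuallyLE hsub
  calc (0:ℝ) < (2:ℝ) ^ (r-1) * 3⁻¹ := hpos
    _ ≤ ∫ x in Ioc (1:ℝ) 2, fmu r 1 x := hge
    _ ≤ crc r := hmono

lemma fmu_integral {r : ℝ} (hr0 : 0 < r) (hr1 : r < 1) {μ : ℝ} (hμ : 0 ≤ μ) :
    ∫ x in Ioi (0:ℝ), fmu r μ x = μ ^ r * crc r := by
  rcases hμ.eq_or_lt with h | h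
  · subst h
    simp [fmu, Real.zero_rpow hr0.ne']
  · have hcomp := integral_comp_mul_left_Ioi (fmu r μ) 0 h
    rw [mul_zero] at hcomp
    have heq : ∀ x ∈ Ioi (0:ℝ), fmu r μ (μ * x) = μ ^ (r-1) * fmu r 1 x := by
      intro x hx
      have hx0 : (0:ℝ) < x := hx
      unfold fmu
      rw [Real.mul_rpow h.le hx0.le]
      have : (μ + μ * x)⁻¹ = μ⁻¹ * (1 + x)⁻¹ := by
        rw [← mul_inv, mul_add, mul_one]
      rw [this]
      field_simp
    have hcongr : ∫ x in Ioi (0:ℝ), fmu r μ (μ * x) = μ ^ (r-1) * crc r := by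
      rw [setIntegral_congr_fun measurableSet_Ioi heq, integral_const_mul]
      rfl
    rw [hcongr] at hcomp
    have : ∫ x in Ioi (0:ℝ), fmu r μ x = μ * (μ ^ (r-1) * crc r) := by
      have h2 := congrArg (fun t : ℝ => μ * t) hcomp
      simp only [smul_eq_mul, ← mul_assoc, mul_inv_cancel₀ h.ne', one_mul] at h2
      linarith
    rw [this, ← mul_assoc]
    congr 1
    rw [← Real.rpow_one_add' h.le (by linarith : (1:ℝ) + (r-1) ≠ 0)]
    norm_num

lemma herm_trace {A : Matrix (Fin m) (Fin m) ℝ} (hA : A.IsHermitian) :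
    A.trace = ∑ i, hA.eigenvalues i := by
  conv_lhs => rw [spectral_real hA]
  rw [conj_trace' _ ((Matrix.mem_unitaryGroup_iff').mp (hA.eigenvectorUnitary).2)]

lemma sum_rpow_le (μl lam nu : Fin m → ℝ) (hμ : ∀ i, 0 ≤ μl i) (hlam : ∀ i, 0 ≤ lam i)
    (hnu : ∀ i, 0 ≤ nu i)
    (hx : ∀ x : ℝ, 0 < x → ∑ i, μl i * (μl i + x)⁻¹ ≤
      (∑ i, lam i * (lam i + x)⁻¹) + ∑ i, nu i * (nu i + x)⁻¹)
    {r : ℝ} (hr0 : 0 < r) (hr1 : r < 1) :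
    ∑ i, μl i ^ r ≤ (∑ i, lam i ^ r) + ∑ i, nu i ^ r := by
  have hFint : ∀ v : Fin m → ℝ, (∀ i, 0 ≤ v i) →
      IntegrableOn (fun x => ∑ i, fmu r (v i) x) (Ioi 0) :=
    fun v hv => integrable_finset_sum _ (fun i _ => fmu_integrable hr0 hr1 (hv i))
  have hFval : ∀ v : Fin m → ℝ, (∀ i, 0 ≤ v i) →
      ∫ x in Ioi (0:ℝ), ∑ i, fmu r (v i) x = (∑ i, v i ^ r) * crc r := by
    intro v hv
    rw [integral_finset_sum _ (fun i _ => fmu_integrable hr0 hr1 (hv i))]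
    rw [Finset.sum_mul]
    exact Finset.sum_congr rfl (fun i _ => fmu_integral hr0 hr1 (hv i))
  have hpt : ∀ x ∈ Ioi (0:ℝ), (∑ i, fmu r (μl i) x) ≤
      (∑ i, fmu r (lam i) x) + ∑ i, fmu r (nu i) x := by
    intro x hx0
    have hx0' : (0:ℝ) < x := hx0
    have hsum : ∀ v : Fin m → ℝ, (∑ i, fmu r (v i) x)
        = x ^ (r-1) * ∑ i, v i * (v i + x)⁻¹ := by
      intro v
      rw [Finset.mul_sum]
      rfl
    rw [hsum, hsum, hsum, ← mul_add]
    exact mul_le_mul_of_nonneg_left (hx x hx0') (Real.rpow_nonneg hx0'.le _)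
  have hmono := setIntegral_mono_on (hFint μl hμ)
      ((hFint lam hlam).add (hFint nu hnu)) measurableSet_Ioi hpt
  rw [hFval μl hμ] at hmono
  simp only [Pi.add_apply] at hmono
  rw [integral_add (hFint lam hlam) (hFint nu hnu), hFval lam hlam, hFval nu hnu] at hmono
  rw [← add_mul] at hmono
  exact le_of_mul_le_mul_right hmono (crc_pos hr0 hr1)

lemma mccarthy {P Q S : Matrix (Fin m) (Fin m) ℝ} (hP : P.PosSemidef) (hQ : Q.PosSemidef)
    (hS : S.IsHermitian) (hSeq : S = P + Q) {r : ℝ} (hr0 : 0 < r) (hr1 : r ≤ 1) :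
    ∑ i, hS.eigenvalues i ^ r ≤
      (∑ i, hP.1.eigenvalues i ^ r) + ∑ i, hQ.1.eigenvalues i ^ r := by
  subst hSeq
  have hE : hS.eigenvalues = (hP.add hQ).1.eigenvalues := rfl
  rcases eq_or_lt_of_le hr1 with h1 | h1
  · subst h1
    simp only [Real.rpow_one]
    rw [← herm_trace hS, ← herm_trace hP.1, ← herm_trace hQ.1, trace_add]
  · rw [hE]
    exact sum_rpow_le _ _ _ (hP.add hQ).eigenvalues_nonneg hP.eigenvalues_nonneg
      hQ.eigenvalues_nonneg (fun x hx => perx hP hQ hx) hr0 h1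

end McCarthyAux

lemma schatten_pow {N : Type*} [Fintype N] {m : ℕ} {p : ℝ} (hp0 : 0 < p)
    (M : Matrix N (Fin m) ℝ) :
    schattenNorm p M ^ p
      = ∑ i, ((Matrix.isHermitian_conjTranspose_mul_self M).eigenvalues i) ^ (p / 2) := by
  have hPSD : (Mᵀ * M).PosSemidef := by
    have := Matrix.posSemidef_conjTranspose_mul_self M
    simpa using this
  have hnn : ∀ i, 0 ≤ (Matrix.isHermitian_conjTranspose_mul_self M).eigenvalues i :=
    fun i => hPSD.eigenvalues_nonneg i
  unfold schattenNorm
  have hS0 : 0 ≤ ∑ i, Real.sqrt ((Matrix.isHermitian_conjTranspose_mul_self M).eigenvalues i) ^ p :=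
    Finset.sum_nonneg fun i _ => Real.rpow_nonneg (Real.sqrt_nonneg _) _
  rw [← Real.rpow_mul hS0, one_div, inv_mul_cancel₀ hp0.ne', Real.rpow_one]
  refine Finset.sum_congr rfl fun i _ => ?_
  rw [Real.sqrt_eq_rpow, ← Real.rpow_mul (hnn i), show (1:ℝ)/2 * p = p / 2 by ring]

/-- For `0 < p ≤ 2`, the p-th power of the Schatten p-norm is subadditive under row
concatenation: `‖[X; Y]‖_{S_p}^p ≤ ‖X‖_{S_p}^p + ‖Y‖_{S_p}^p`. -/
theorem schattenNorm_rpow_subadditive {n₁ n₂ m : ℕ}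
    (X : Matrix (Fin n₁) (Fin m) ℝ) (Y : Matrix (Fin n₂) (Fin m) ℝ)
    (p : ℝ) (hp0 : 0 < p) (hp2 : p ≤ 2) :
    schattenNorm p (Matrix.fromRows X Y) ^ p ≤
      schattenNorm p X ^ p + schattenNorm p Y ^ p := by
  rw [schatten_pow hp0, schatten_pow hp0, schatten_pow hp0]
  have hPX : (Xᵀ * X).PosSemidef := by
    have := Matrix.posSemidef_conjTranspose_mul_self X
    simpa using this
  have hPY : (Yᵀ * Y).PosSemidef := by
    have := Matrix.posSemidef_conjTranspose_mul_self Y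
    simpa using this
  have hSeq : (Matrix.fromRows X Y)ᵀ * Matrix.fromRows X Y = Xᵀ * X + Yᵀ * Y := by
    rw [transpose_fromRows, fromCols_mul_fromRows]
  exact mccarthy hPX hPY (Matrix.isHermitian_conjTranspose_mul_self (Matrix.fromRows X Y)) hSeq
    (by linarith) (by linarith)
end

section
/- For p ≥ 2 and 0 < ε < 1, the Schatten p-norm satisfies the smoothness property with parameters (ε, ε^{p/2}/(p/2)): for all real matrices A, Y, C with m columns such that A is the vertical concatenation of some matrix X and Y, if (1 − ε^{p/2}/(p/2))·‖A‖_{S_p} ≤ ‖Y‖_{S_p}, then (1 − ε)·‖[A; C]‖_{S_p} ≤ ‖[Y; C]‖_{S_p}, where [M; C] denotes vertical concatenation. -/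
/-!
Write `q = p / 2 ≥ 1` and `‖M‖ᵖ = tr (MᵀM)^q`. Two trace inequalities for positive
semidefinite matrices drive the proof, both consequences of Peierls' inequality
`∑ᵢ ⟪bᵢ, S bᵢ⟫^q ≤ tr S^q` for an orthonormal family `b` (Jensen along the spectral
decomposition of `S`):

* superadditivity, `‖X‖ᵖ + ‖Y‖ᵖ ≤ ‖[X; Y]‖ᵖ`: since `MᵀM` and `MMᵀ` have the same nonzero
  eigenvalues, apply Peierls to the block matrix `MMᵀ` for `M = [X; Y]`, in the eigenbases
  of its diagonal blocks `XXᵀ` and `YYᵀ`;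
* the triangle inequality `‖[X; Y]‖² ≤ ‖X‖² + ‖Y‖²`: Minkowski in `ℓ^q` along the
  eigenbasis of `XᵀX + YᵀY`, followed by Peierls.

With `A = [X; Y]`, superadditivity and the hypothesis bound `‖X‖ᵖ` by
`(1 - (1 - δ)ᵖ) ‖[A; C]‖ᵖ`, where `δ = ε^q / q`, and a Bernoulli estimate turns this into
`‖X‖² ≤ (2ε - ε²) ‖[A; C]‖²`. The triangle inequality for `[X; [Y; C]]`, which has the
same Gram matrix as `[A; C]`, then gives `(1 - ε)² ‖[A; C]‖² ≤ ‖[Y; C]‖²`.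
-/

open Matrix

open scoped RealInnerProductSpace

namespace Matrix

section TraceRpow

variable {n : Type*} [Fintype n] [DecidableEq n] {S : Matrix n n ℝ} {q : ℝ}

/-- `tr S^q` for a symmetric matrix `S`, and `0` otherwise. -/
noncomputable def traceRpow (q : ℝ) (S : Matrix n n ℝ) : ℝ :=
  if hS : S.IsHermitian then ∑ i, hS.eigenvalues i ^ q else 0

lemma IsHermitian.traceRpow_eq (hS : S.IsHermitian) :
    traceRpow q S = ∑ i, hS.eigenvalues i ^ q :=
  dif_pos hS

lemma PosSemidef.traceRpow_nonneg (hS : S.PosSemidef) : 0 ≤ traceRpow q S := by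
  rw [hS.1.traceRpow_eq]
  exact Finset.sum_nonneg fun i _ => Real.rpow_nonneg (hS.eigenvalues_nonneg i) q

lemma IsHermitian.dotProduct_mulVec_eq_sum (hS : S.IsHermitian) (x : EuclideanSpace ℝ n) :
    ⇑x ⬝ᵥ S *ᵥ ⇑x = ∑ j, ⟪hS.eigenvectorBasis j, x⟫ ^ 2 * hS.eigenvalues j := by
  have hsymm : Sᵀ = S := by simpa using hS.eq
  have hx : ⇑x ⬝ᵥ S *ᵥ ⇑x = ⟪x, WithLp.toLp 2 (S *ᵥ x)⟫ := by
    simp [EuclideanSpace.inner_eq_star_dotProduct, dotProduct_comm]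
  rw [hx, ← hS.eigenvectorBasis.sum_inner_mul_inner]
  refine Finset.sum_congr rfl fun j _ => ?_
  have hj : ⟪hS.eigenvectorBasis j, WithLp.toLp 2 (S *ᵥ ⇑x)⟫ =
      hS.eigenvalues j * ⟪hS.eigenvectorBasis j, x⟫ := by
    simp only [EuclideanSpace.inner_eq_star_dotProduct, star_trivial]
    rw [dotProduct_comm, dotProduct_mulVec, ← mulVec_transpose, hsymm,
      hS.mulVec_eigenvectorBasis, smul_dotProduct, smul_eq_mul, dotProduct_comm]
  rw [hj, real_inner_comm]
  ring

lemma IsHermitian.dotProduct_mulVec_eigenvectorBasis (hS : S.IsHermitian) (j : n) :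
    ⇑(hS.eigenvectorBasis j) ⬝ᵥ S *ᵥ ⇑(hS.eigenvectorBasis j) = hS.eigenvalues j := by
  have h : ⟪hS.eigenvectorBasis j, hS.eigenvectorBasis j⟫ = 1 := by
    rw [real_inner_self_eq_norm_sq, hS.eigenvectorBasis.orthonormal.1 j, one_pow]
  simp only [EuclideanSpace.inner_eq_star_dotProduct, star_trivial] at h
  rw [hS.mulVec_eigenvectorBasis, dotProduct_smul, smul_eq_mul, h, mul_one]

/-- Peierls' inequality for `x ↦ x ^ q`. -/
lemma PosSemidef.sum_rpow_dotProduct_mulVec_le_traceRpow (hS : S.PosSemidef) (hq : 1 ≤ q)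
    {ι : Type*} [Fintype ι] {b : ι → EuclideanSpace ℝ n} (hb : Orthonormal ℝ b) :
    ∑ i, (⇑(b i) ⬝ᵥ S *ᵥ ⇑(b i)) ^ q ≤ traceRpow q S := by
  set u := hS.1.eigenvectorBasis
  set a := hS.1.eigenvalues
  have hrow (i : ι) : ∑ j, ⟪u j, b i⟫ ^ 2 = 1 := by
    rw [u.sum_sq_inner_right, hb.1 i, one_pow]
  have hcol (j : n) : ∑ i, ⟪u j, b i⟫ ^ 2 ≤ 1 := by
    simpa [real_inner_comm, u.orthonormal.1 j] using
      hb.sum_inner_products_le (u j) (s := Finset.univ)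
  rw [hS.1.traceRpow_eq]
  calc ∑ i, (⇑(b i) ⬝ᵥ S *ᵥ ⇑(b i)) ^ q
      = ∑ i, (∑ j, ⟪u j, b i⟫ ^ 2 * a j) ^ q := by
        simp_rw [hS.1.dotProduct_mulVec_eq_sum]; rfl
    _ ≤ ∑ i, ∑ j, ⟪u j, b i⟫ ^ 2 * a j ^ q := Finset.sum_le_sum fun i _ =>
        Real.rpow_arith_mean_le_arith_mean_rpow _ _ _ (fun _ _ => sq_nonneg _) (hrow i)
          (fun j _ => hS.eigenvalues_nonneg j) hq
    _ = ∑ j, (∑ i, ⟪u j, b i⟫ ^ 2) * a j ^ q := by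
        rw [Finset.sum_comm]; simp_rw [Finset.sum_mul]
    _ ≤ ∑ j, a j ^ q := Finset.sum_le_sum fun j _ =>
        mul_le_of_le_one_left (Real.rpow_nonneg (hS.eigenvalues_nonneg j) q) (hcol j)

lemma PosSemidef.traceRpow_add_rpow_inv_le {P D : Matrix n n ℝ} (hP : P.PosSemidef)
    (hD : D.PosSemidef) (hq : 1 ≤ q) :
    traceRpow q (P + D) ^ q⁻¹ ≤ traceRpow q P ^ q⁻¹ + traceRpow q D ^ q⁻¹ := by
  have hT := (hP.add hD).1
  set v := hT.eigenvectorBasis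
  have hPv (i : n) : 0 ≤ ⇑(v i) ⬝ᵥ P *ᵥ ⇑(v i) := by
    simpa using hP.dotProduct_mulVec_nonneg (v i)
  have hDv (i : n) : 0 ≤ ⇑(v i) ⬝ᵥ D *ᵥ ⇑(v i) := by
    simpa using hD.dotProduct_mulVec_nonneg (v i)
  have hsplit (i : n) :
      hT.eigenvalues i = ⇑(v i) ⬝ᵥ P *ᵥ ⇑(v i) + ⇑(v i) ⬝ᵥ D *ᵥ ⇑(v i) := by
    rw [← hT.dotProduct_mulVec_eigenvectorBasis, add_mulVec, dotProduct_add]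
  calc traceRpow q (P + D) ^ q⁻¹
      = (∑ i, (⇑(v i) ⬝ᵥ P *ᵥ ⇑(v i) + ⇑(v i) ⬝ᵥ D *ᵥ ⇑(v i)) ^ q) ^ q⁻¹ := by
        simp_rw [hT.traceRpow_eq, hsplit]
    _ ≤ (∑ i, (⇑(v i) ⬝ᵥ P *ᵥ ⇑(v i)) ^ q) ^ q⁻¹ +
          (∑ i, (⇑(v i) ⬝ᵥ D *ᵥ ⇑(v i)) ^ q) ^ q⁻¹ := by
        simpa only [one_div] using
          Real.Lp_add_le_of_nonneg Finset.univ hq (fun i _ => hPv i) (fun i _ => hDv i)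
    _ ≤ traceRpow q P ^ q⁻¹ + traceRpow q D ^ q⁻¹ := by
        gcongr
        · exact Finset.sum_nonneg fun i _ => Real.rpow_nonneg (hPv i) q
        · exact hP.sum_rpow_dotProduct_mulVec_le_traceRpow hq v.orthonormal
        · exact Finset.sum_nonneg fun i _ => Real.rpow_nonneg (hDv i) q
        · exact hD.sum_rpow_dotProduct_mulVec_le_traceRpow hq v.orthonormal

/-- `AB` and `BA` have the same nonzero eigenvalues, with multiplicity. -/
lemma sum_eigenvalues_mul_comm {m : Type*} [Fintype m] [DecidableEq m] {f : ℝ → ℝ}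
    (hf : f 0 = 0) {A : Matrix m n ℝ} {B : Matrix n m ℝ} (hAB : (A * B).IsHermitian)
    (hBA : (B * A).IsHermitian) :
    ∑ i, f (hAB.eigenvalues i) = ∑ j, f (hBA.eigenvalues j) := by
  have hroots := congrArg Polynomial.roots (charpoly_mul_comm' A B)
  rw [Polynomial.roots_mul, Polynomial.roots_mul, Polynomial.roots_X_pow,
    Polynomial.roots_X_pow, hAB.roots_charpoly_eq_eigenvalues,
    hBA.roots_charpoly_eq_eigenvalues] at hroots
  · simpa [hf, Multiset.map_nsmul, Multiset.sum_nsmul] using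
      congrArg (fun s => (s.map f).sum) hroots
  all_goals exact mul_ne_zero (pow_ne_zero _ Polynomial.X_ne_zero) (charpoly_monic _).ne_zero

end TraceRpow

section Gram

variable {n m₁ m₂ : Type*} [Fintype m₁] [Fintype m₂]

lemma transpose_fromRows_mulVec_sumElim_zero (A : Matrix m₁ n ℝ) (B : Matrix m₂ n ℝ)
    (x : m₁ → ℝ) : (fromRows A B)ᵀ *ᵥ Sum.elim x 0 = Aᵀ *ᵥ x := by
  rw [transpose_fromRows, fromCols_mulVec_sumElim, mulVec_zero, add_zero]

lemma transpose_fromRows_mulVec_zero_sumElim (A : Matrix m₁ n ℝ) (B : Matrix m₂ n ℝ)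
    (y : m₂ → ℝ) : (fromRows A B)ᵀ *ᵥ Sum.elim 0 y = Bᵀ *ᵥ y := by
  rw [transpose_fromRows, fromCols_mulVec_sumElim, mulVec_zero, zero_add]

lemma transpose_fromRows_mul_fromRows (A : Matrix m₁ n ℝ) (B : Matrix m₂ n ℝ) :
    (fromRows A B)ᵀ * fromRows A B = Aᵀ * A + Bᵀ * B := by
  rw [transpose_fromRows, fromCols_mul_fromRows]

lemma orthonormal_sumElim_toLp {ι₁ ι₂ : Type*} {u : ι₁ → EuclideanSpace ℝ m₁}
    {w : ι₂ → EuclideanSpace ℝ m₂} (hu : Orthonormal ℝ u) (hw : Orthonormal ℝ w) :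
    Orthonormal ℝ (Sum.elim (fun i => WithLp.toLp 2 (Sum.elim ⇑(u i) 0))
      (fun j => WithLp.toLp 2 (Sum.elim 0 ⇑(w j))) :
        ι₁ ⊕ ι₂ → EuclideanSpace ℝ (m₁ ⊕ m₂)) := by
  classical
  rw [orthonormal_iff_ite] at hu hw ⊢
  simp only [EuclideanSpace.inner_eq_star_dotProduct, star_trivial] at hu hw
  rintro (i | j) (i' | j') <;>
    simp [EuclideanSpace.inner_toLp_toLp, sumElim_dotProduct_sumElim, hu, hw]

variable [Fintype n]

lemma posSemidef_transpose_mul_self (A : Matrix m₁ n ℝ) : (Aᵀ * A).PosSemidef := by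
  simpa using posSemidef_conjTranspose_mul_self A

lemma posSemidef_self_mul_transpose (A : Matrix m₁ n ℝ) : (A * Aᵀ).PosSemidef := by
  simpa using posSemidef_self_mul_conjTranspose A

lemma dotProduct_mul_transpose_mulVec (A : Matrix m₁ n ℝ) (x : m₁ → ℝ) :
    x ⬝ᵥ (A * Aᵀ) *ᵥ x = (Aᵀ *ᵥ x) ⬝ᵥ (Aᵀ *ᵥ x) := by
  rw [← mulVec_mulVec, dotProduct_mulVec, ← mulVec_transpose]

variable [DecidableEq n] [DecidableEq m₁] [DecidableEq m₂] {q : ℝ}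

lemma traceRpow_transpose_mul_self (hq : q ≠ 0) (A : Matrix m₁ n ℝ) :
    traceRpow q (Aᵀ * A) = traceRpow q (A * Aᵀ) := by
  rw [(posSemidef_transpose_mul_self A).1.traceRpow_eq,
    (posSemidef_self_mul_transpose A).1.traceRpow_eq]
  exact sum_eigenvalues_mul_comm (f := (· ^ q)) (Real.zero_rpow hq) _ _

lemma traceRpow_transpose_mul_self_add_le (hq : 1 ≤ q) (A : Matrix m₁ n ℝ)
    (B : Matrix m₂ n ℝ) :
    traceRpow q (Aᵀ * A) + traceRpow q (Bᵀ * B) ≤ traceRpow q (Aᵀ * A + Bᵀ * B) := by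
  have hq0 : q ≠ 0 := by positivity
  have hA := (posSemidef_self_mul_transpose A).1
  have hB := (posSemidef_self_mul_transpose B).1
  set M := fromRows A B
  have hM_inl (x : m₁ → ℝ) :
      Sum.elim x 0 ⬝ᵥ (M * Mᵀ) *ᵥ Sum.elim x 0 = x ⬝ᵥ (A * Aᵀ) *ᵥ x := by
    rw [dotProduct_mul_transpose_mulVec, dotProduct_mul_transpose_mulVec,
      transpose_fromRows_mulVec_sumElim_zero]
  have hM_inr (y : m₂ → ℝ) :
      Sum.elim 0 y ⬝ᵥ (M * Mᵀ) *ᵥ Sum.elim 0 y = y ⬝ᵥ (B * Bᵀ) *ᵥ y := by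
    rw [dotProduct_mul_transpose_mulVec, dotProduct_mul_transpose_mulVec,
      transpose_fromRows_mulVec_zero_sumElim]
  calc traceRpow q (Aᵀ * A) + traceRpow q (Bᵀ * B)
      = ∑ i, hA.eigenvalues i ^ q + ∑ j, hB.eigenvalues j ^ q := by
        rw [traceRpow_transpose_mul_self hq0, traceRpow_transpose_mul_self hq0,
          hA.traceRpow_eq, hB.traceRpow_eq]
    _ ≤ traceRpow q (M * Mᵀ) := by
        simpa only [Fintype.sum_sum_type, Sum.elim_inl, Sum.elim_inr, WithLp.ofLp_toLp, hM_inl,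
          hM_inr, hA.dotProduct_mulVec_eigenvectorBasis, hB.dotProduct_mulVec_eigenvectorBasis]
          using (posSemidef_self_mul_transpose M).sum_rpow_dotProduct_mulVec_le_traceRpow hq
            (orthonormal_sumElim_toLp hA.eigenvectorBasis.orthonormal
              hB.eigenvectorBasis.orthonormal)
    _ = traceRpow q (Aᵀ * A + Bᵀ * B) := by
        rw [← traceRpow_transpose_mul_self hq0, transpose_fromRows_mul_fromRows]

end Gram

end Matrix

lemma one_sub_one_sub_rpow_le {p ε : ℝ} (hp : 2 ≤ p) (hε0 : 0 < ε) (hε1 : ε < 1) :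
    1 - (1 - ε ^ (p / 2) / (p / 2)) ^ p ≤ (2 * ε - ε ^ 2) ^ (p / 2) := by
  obtain ⟨q, rfl⟩ : ∃ q, p = 2 * q := ⟨p / 2, by ring⟩
  rw [mul_div_cancel_left₀ q two_ne_zero]
  have hq : 1 ≤ q := by linarith
  have hq0 : 0 < q := by linarith
  set s := ε ^ q
  have hs0 : 0 < s := Real.rpow_pos_of_pos hε0 q
  have hs1 : s < 1 := Real.rpow_lt_one hε0.le hε1 hq0
  have hδ : s / q ≤ s := div_le_self hs0.le hq
  have hbern (x : ℝ) (hx : -1 ≤ x) : 1 + q * x ≤ (1 + x) ^ q :=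
    one_add_mul_self_le_rpow_one_add hx hq
  have h1 : 1 - s ≤ (1 - s / q) ^ q := by
    have := hbern (-(s / q)) (by linarith)
    rwa [← sub_eq_add_neg, mul_neg, mul_div_cancel₀ _ hq0.ne', ← sub_eq_add_neg] at this
  have h2 : 2 - s ≤ (2 - ε) ^ q := by
    have h := hbern (1 - ε) (by linarith)
    have h' := hbern (ε - 1) (by linarith)
    rw [show 1 + (1 - ε) = 2 - ε by ring] at h
    rw [show 1 + (ε - 1) = ε by ring] at h'
    linarith
  have hsq : (1 - s / q) ^ (2 * q) = ((1 - s / q) ^ q) ^ 2 := by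
    rw [mul_comm, Real.rpow_mul (by linarith), Real.rpow_two]
  calc 1 - (1 - s / q) ^ (2 * q) ≤ s * (2 - s) := by
        rw [hsq]; nlinarith [pow_le_pow_left₀ (by linarith) h1 2]
    _ ≤ s * (2 - ε) ^ q := by gcongr
    _ = (2 * ε - ε ^ 2) ^ q := by
        rw [← Real.mul_rpow hε0.le (by linarith)]; ring_nf

lemma sq_le_mul_sq_of_rpow_le {p a b c : ℝ} (hp : 0 < p) (ha : 0 ≤ a) (hb : 0 ≤ b)
    (hc : 0 ≤ c) (h : a ^ p ≤ c ^ (p / 2) * b ^ p) : a ^ 2 ≤ c * b ^ 2 := by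
  have hsq (x : ℝ) (hx : 0 ≤ x) : (x ^ 2) ^ (p / 2) = x ^ p := by
    rw [← Real.rpow_natCast, ← Real.rpow_mul hx]
    congr 1
    push_cast
    ring
  rwa [← Real.rpow_le_rpow_iff (sq_nonneg a) (mul_nonneg hc (sq_nonneg b)) (half_pos hp),
    Real.mul_rpow hc (sq_nonneg b), hsq a ha, hsq b hb]

section Schatten

variable {m : ℕ} {N₁ N₂ N₃ : Type*} [Fintype N₁] [Fintype N₂] [Fintype N₃] {p : ℝ}

lemma schattenNorm_nonneg (p : ℝ) (M : Matrix N₁ (Fin m) ℝ) : 0 ≤ schattenNorm p M := by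
  unfold schattenNorm
  positivity

lemma schattenNorm_eq_traceRpow (M : Matrix N₁ (Fin m) ℝ) :
    schattenNorm p M = traceRpow (p / 2) (Mᵀ * M) ^ (1 / p) := by
  have hM := posSemidef_conjTranspose_mul_self M
  rw [schattenNorm, ← conjTranspose_eq_transpose_of_trivial, hM.1.traceRpow_eq]
  congr 1
  refine Finset.sum_congr rfl fun i _ => ?_
  rw [Real.sqrt_eq_rpow, ← Real.rpow_mul (hM.eigenvalues_nonneg i)]
  ring_nf

lemma schattenNorm_rpow (hp : p ≠ 0) (M : Matrix N₁ (Fin m) ℝ) :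
    schattenNorm p M ^ p = traceRpow (p / 2) (Mᵀ * M) := by
  rw [schattenNorm_eq_traceRpow, one_div,
    Real.rpow_inv_rpow (posSemidef_transpose_mul_self M).traceRpow_nonneg hp]

lemma schattenNorm_sq (hp : p ≠ 0) (M : Matrix N₁ (Fin m) ℝ) :
    schattenNorm p M ^ 2 = traceRpow (p / 2) (Mᵀ * M) ^ (p / 2)⁻¹ := by
  rw [schattenNorm_eq_traceRpow, ← Real.rpow_natCast,
    ← Real.rpow_mul (posSemidef_transpose_mul_self M).traceRpow_nonneg]
  congr 1
  push_cast
  field_simp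

lemma schattenNorm_fromRows_assoc (X : Matrix N₁ (Fin m) ℝ) (Y : Matrix N₂ (Fin m) ℝ)
    (C : Matrix N₃ (Fin m) ℝ) :
    schattenNorm p (fromRows (fromRows X Y) C) = schattenNorm p (fromRows X (fromRows Y C)) := by
  simp_rw [schattenNorm_eq_traceRpow, transpose_fromRows_mul_fromRows, add_assoc]

lemma schattenNorm_fromRows_sq_le (hp : 2 ≤ p) (X : Matrix N₁ (Fin m) ℝ)
    (Y : Matrix N₂ (Fin m) ℝ) :
    schattenNorm p (fromRows X Y) ^ 2 ≤ schattenNorm p X ^ 2 + schattenNorm p Y ^ 2 := by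
  have hp0 : p ≠ 0 := by positivity
  rw [schattenNorm_sq hp0, schattenNorm_sq hp0, schattenNorm_sq hp0,
    transpose_fromRows_mul_fromRows]
  exact (posSemidef_transpose_mul_self X).traceRpow_add_rpow_inv_le
    (posSemidef_transpose_mul_self Y) (by linarith)

variable [DecidableEq N₁] [DecidableEq N₂] [DecidableEq N₃]

lemma schattenNorm_rpow_add_le (hp : 2 ≤ p) (X : Matrix N₁ (Fin m) ℝ)
    (Y : Matrix N₂ (Fin m) ℝ) :
    schattenNorm p X ^ p + schattenNorm p Y ^ p ≤ schattenNorm p (fromRows X Y) ^ p := by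
  have hp0 : p ≠ 0 := by positivity
  rw [schattenNorm_rpow hp0, schattenNorm_rpow hp0, schattenNorm_rpow hp0,
    transpose_fromRows_mul_fromRows]
  exact traceRpow_transpose_mul_self_add_le (by linarith) X Y

lemma schattenNorm_rpow_le_of_mul_le (hp : 2 ≤ p) {c : ℝ} (hc0 : 0 ≤ c) (hc1 : c ≤ 1)
    {X : Matrix N₁ (Fin m) ℝ} {Y : Matrix N₂ (Fin m) ℝ} (C : Matrix N₃ (Fin m) ℝ)
    (h : c * schattenNorm p (fromRows X Y) ≤ schattenNorm p Y) :
    schattenNorm p X ^ p ≤ (1 - c ^ p) * schattenNorm p (fromRows (fromRows X Y) C) ^ p := by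
  have hXY := schattenNorm_rpow_add_le hp X Y
  have hXYC := schattenNorm_rpow_add_le hp (fromRows X Y) C
  have hc : c ^ p * schattenNorm p (fromRows X Y) ^ p ≤ schattenNorm p Y ^ p := by
    rw [← Real.mul_rpow hc0 (schattenNorm_nonneg p _)]
    exact Real.rpow_le_rpow (mul_nonneg hc0 (schattenNorm_nonneg p _)) h (by linarith)
  have hκ : 0 ≤ 1 - c ^ p := by
    linarith [Real.rpow_le_one hc0 hc1 (by linarith : 0 ≤ p)]
  nlinarith [mul_le_mul_of_nonneg_left (le_of_add_le_of_nonneg_left hXYC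
    (Real.rpow_nonneg (schattenNorm_nonneg p C) p)) hκ]

end Schatten

/-- For `p ≥ 2` and `0 < ε < 1`, the Schatten p-norm is `(ε, ε^{p/2}/(p/2))`-smooth:
if `A = [X; Y]` and `(1 − ε^{p/2}/(p/2))·‖A‖_{S_p} ≤ ‖Y‖_{S_p}`, then for every `C`,
`(1 − ε)·‖[A; C]‖_{S_p} ≤ ‖[Y; C]‖_{S_p}`. -/
theorem schattenNorm_smooth_of_two_le {m : ℕ} (p ε : ℝ) (hp : 2 ≤ p)
    (hε0 : 0 < ε) (hε1 : ε < 1) :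
    ∀ {n₁ n₂ n₃ : ℕ} (X : Matrix (Fin n₁) (Fin m) ℝ) (Y : Matrix (Fin n₂) (Fin m) ℝ)
      (C : Matrix (Fin n₃) (Fin m) ℝ),
      (1 - ε ^ (p / 2) / (p / 2)) * schattenNorm p (Matrix.fromRows X Y) ≤ schattenNorm p Y →
      (1 - ε) * schattenNorm p (Matrix.fromRows (Matrix.fromRows X Y) C) ≤
        schattenNorm p (Matrix.fromRows Y C) := by
  intro n₁ n₂ n₃ X Y C hXY
  have hδ0 : 0 ≤ ε ^ (p / 2) / (p / 2) := by positivity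
  have hδ1 : ε ^ (p / 2) / (p / 2) ≤ 1 :=
    (div_le_self (by positivity) (by linarith)).trans
      (Real.rpow_le_one hε0.le hε1.le (by linarith))
  have hX := schattenNorm_rpow_le_of_mul_le hp (by linarith) (by linarith) C hXY
  have hX' : schattenNorm p X ^ 2 ≤
      (2 * ε - ε ^ 2) * schattenNorm p (fromRows (fromRows X Y) C) ^ 2 :=
    sq_le_mul_sq_of_rpow_le (by linarith) (schattenNorm_nonneg p _) (schattenNorm_nonneg p _)
      (by nlinarith) (hX.trans (mul_le_mul_of_nonneg_right (one_sub_one_sub_rpow_le hp hε0 hε1)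
        (Real.rpow_nonneg (schattenNorm_nonneg p _) p)))
  have htri := schattenNorm_fromRows_sq_le hp X (fromRows Y C)
  rw [← schattenNorm_fromRows_assoc] at htri
  rw [← sq_le_sq₀ (mul_nonneg (by linarith) (schattenNorm_nonneg p _))
    (schattenNorm_nonneg p _)]
  nlinarith
end

section
/- For p ≥ 2 and PSD matrices B, C of the same size, tr((B + C)^{p/2}) ≤ (tr(B^{p/2})^{2/p} + tr(C^{p/2})^{2/p})^{p/2}; i.e., the function B ↦ (tr(B^{p/2}))^{2/p} is subadditive on PSD matrices. -/
/-!
Let `u` be an eigenbasis of `B + C`. Each eigenvalue of `B + C` splits as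
`⟪u i, B u i⟫ + ⟪u i, C u i⟫`, and if `v` is an eigenbasis of `B`, then
`⟪u i, B u i⟫ = ∑ j, |⟪u i, v j⟫|² λ_j(B)`: the diagonal of `B` in the basis `u` is the image
of the eigenvalues of `B` under a doubly stochastic matrix, and likewise for `C`. By Jensen's
inequality a doubly stochastic matrix does not increase `∑ i, f (x i)` for convex `f`, in
particular the `ℓ^q` norm of a nonnegative vector for `q ≥ 1`. Minkowski's inequality in
`ℓ^q` then gives `‖λ(B + C)‖_q ≤ ‖λ(B)‖_q + ‖λ(C)‖_q`, which for `q = p / 2` is the claim.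
-/

open Matrix Finset

namespace Matrix

open scoped ComplexOrder

variable {n 𝕜 : Type*} [Fintype n] [DecidableEq n] [RCLike 𝕜]

theorem _root_.ConvexOn.sum_map_mulVec_le_of_mem_doublyStochastic {s : Set ℝ} {f : ℝ → ℝ}
    (hf : ConvexOn ℝ s f) {w : Matrix n n ℝ} (hw : w ∈ doublyStochastic ℝ n) {x : n → ℝ}
    (hx : ∀ i, x i ∈ s) :
    ∑ i, f ((w *ᵥ x) i) ≤ ∑ i, f (x i) := calc
  ∑ i, f ((w *ᵥ x) i) ≤ ∑ i, ∑ j, w i j * f (x j) := sum_le_sum fun i _ =>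
    hf.map_sum_le (fun j _ => hw.1 i j) (sum_row_of_mem_doublyStochastic hw i) fun j _ => hx j
  _ = ∑ j, f (x j) := by
    rw [sum_comm]
    simp only [← sum_mul, sum_col_of_mem_doublyStochastic hw, one_mul]

theorem map_norm_sq_mem_doublyStochastic_of_mem_unitaryGroup {U : Matrix n n 𝕜}
    (hU : U ∈ unitaryGroup n 𝕜) :
    U.map (‖·‖ ^ 2) ∈ doublyStochastic ℝ n := by
  refine mem_doublyStochastic_iff_sum.2 ⟨fun i j => sq_nonneg _, fun i => ?_, fun j => ?_⟩
  · have h := congr_fun₂ (mem_unitaryGroup_iff.1 hU) i i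
    simp only [mul_apply, star_apply, RCLike.star_def, RCLike.mul_conj, one_apply_eq] at h
    exact_mod_cast h
  · have h := congr_fun₂ (mem_unitaryGroup_iff'.1 hU) j j
    simp only [mul_apply, star_apply, RCLike.star_def, RCLike.conj_mul, one_apply_eq] at h
    exact_mod_cast h

theorem IsHermitian.star_mul_mul_apply_self {B : Matrix n n 𝕜} (hB : B.IsHermitian)
    (U : Matrix n n 𝕜) (i : n) :
    (star U * B * U) i i =
      (((star U * hB.eigenvectorUnitary).map (‖·‖ ^ 2) *ᵥ hB.eigenvalues) i : ℝ) := by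
  set W := star U * (hB.eigenvectorUnitary : Matrix n n 𝕜)
  have hconj : star U * B * U = W * diagonal (RCLike.ofReal ∘ hB.eigenvalues) * star W := by
    conv_lhs => rw [hB.spectral_theorem, Unitary.conjStarAlgAut_apply]
    simp only [W, star_mul, star_star, Matrix.mul_assoc]
  rw [hconj, mul_apply]
  simp only [mul_diagonal, star_apply, RCLike.star_def, mulVec, dotProduct, map_apply,
    Function.comp_apply, RCLike.ofReal_sum, RCLike.ofReal_mul, RCLike.ofReal_pow]
  refine sum_congr rfl fun j _ => ?_
  rw [mul_right_comm, RCLike.mul_conj, mul_comm]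

theorem IsHermitian.exists_eigenvalues_add_eq_mulVec_add_mulVec {B C : Matrix n n 𝕜}
    (hB : B.IsHermitian) (hC : C.IsHermitian) :
    ∃ w₁ ∈ doublyStochastic ℝ n, ∃ w₂ ∈ doublyStochastic ℝ n,
      (hB.add hC).eigenvalues = w₁ *ᵥ hB.eigenvalues + w₂ *ᵥ hC.eigenvalues := by
  set U := (hB.add hC).eigenvectorUnitary
  refine ⟨_, map_norm_sq_mem_doublyStochastic_of_mem_unitaryGroup
    (star U * hB.eigenvectorUnitary).prop, _, map_norm_sq_mem_doublyStochastic_of_mem_unitaryGroup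
    (star U * hC.eigenvectorUnitary).prop, funext fun i => ?_⟩
  have h := congr_fun₂ (hB.add hC).conjStarAlgAut_star_eigenvectorUnitary i i
  rw [Unitary.conjStarAlgAut_star_apply, mul_add, add_mul, add_apply, hB.star_mul_mul_apply_self,
    hC.star_mul_mul_apply_self, diagonal_apply_eq, Function.comp_apply] at h
  rw [Pi.add_apply]
  exact_mod_cast h.symm

theorem PosSemidef.Lp_eigenvalues_add_le {B C : Matrix n n 𝕜} (hB : B.PosSemidef)
    (hC : C.PosSemidef) {q : ℝ} (hq : 1 ≤ q) :
    (∑ i, (hB.isHermitian.add hC.isHermitian).eigenvalues i ^ q) ^ (1 / q) ≤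
      (∑ i, hB.isHermitian.eigenvalues i ^ q) ^ (1 / q) +
        (∑ i, hC.isHermitian.eigenvalues i ^ q) ^ (1 / q) := by
  obtain ⟨w₁, hw₁, w₂, hw₂, heq⟩ :=
    hB.isHermitian.exists_eigenvalues_add_eq_mulVec_add_mulVec hC.isHermitian
  have hmulVec_nonneg {w : Matrix n n ℝ} (hw : w ∈ doublyStochastic ℝ n) {x : n → ℝ}
      (hx : ∀ i, 0 ≤ x i) (i : n) : 0 ≤ (w *ᵥ x) i :=
    sum_nonneg fun j _ => mul_nonneg (hw.1 i j) (hx j)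
  have hLp_le {w : Matrix n n ℝ} (hw : w ∈ doublyStochastic ℝ n) {x : n → ℝ}
      (hx : ∀ i, 0 ≤ x i) :
      (∑ i, (w *ᵥ x) i ^ q) ^ (1 / q) ≤ (∑ i, x i ^ q) ^ (1 / q) :=
    Real.rpow_le_rpow (sum_nonneg fun i _ => Real.rpow_nonneg (hmulVec_nonneg hw hx i) _)
      ((convexOn_rpow hq).sum_map_mulVec_le_of_mem_doublyStochastic hw hx) (by positivity)
  rw [heq]
  exact (Real.Lp_add_le_of_nonneg _ hq (fun i _ => hmulVec_nonneg hw₁ hB.eigenvalues_nonneg i)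
    fun i _ => hmulVec_nonneg hw₂ hC.eigenvalues_nonneg i).trans
      (add_le_add (hLp_le hw₁ hB.eigenvalues_nonneg) (hLp_le hw₂ hC.eigenvalues_nonneg))

end Matrix

/-- For `p ≥ 2` and PSD matrices `B`, `C`,
`tr((B + C)^{p/2}) ≤ (tr(B^{p/2})^{2/p} + tr(C^{p/2})^{2/p})^{p/2}`, where `tr(M^q)` for a
PSD matrix `M` is defined spectrally as `∑ i, λᵢ(M) ^ q`; i.e. `B ↦ (tr(B^{p/2}))^{2/p}`
is subadditive on PSD matrices. -/
theorem trace_rpow_half_subadditive {n : ℕ} (B C : Matrix (Fin n) (Fin n) ℝ)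
    (hB : B.PosSemidef) (hC : C.PosSemidef) (p : ℝ) (hp : 2 ≤ p) :
    ∑ i, (hB.isHermitian.add hC.isHermitian).eigenvalues i ^ (p / 2) ≤
      ((∑ i, hB.isHermitian.eigenvalues i ^ (p / 2)) ^ (2 / p) +
        (∑ i, hC.isHermitian.eigenvalues i ^ (p / 2)) ^ (2 / p)) ^ (p / 2) := by
  have hLp := hB.Lp_eigenvalues_add_le hC (by linarith : 1 ≤ p / 2)
  rw [one_div] at hLp
  rw [← inv_div p 2]
  set T := ∑ i, (hB.isHermitian.add hC.isHermitian).eigenvalues i ^ (p / 2)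
  have hT : 0 ≤ T := sum_nonneg fun i _ => Real.rpow_nonneg ((hB.add hC).eigenvalues_nonneg i) _
  calc T = (T ^ (p / 2)⁻¹) ^ (p / 2) := (Real.rpow_inv_rpow hT (by positivity)).symm
    _ ≤ _ := Real.rpow_le_rpow (Real.rpow_nonneg hT _) hLp (by positivity)
end
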